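/- arXiv:1508.07649 — 6 statements merged into one kernel-verified Lean document; each statement's English description precedes it below -/
import Mathlib

section
/- (Lemma 1, part 2, existence form.) There exist γ₀ > 0, λ > 0 and μ₀ > 0, with μ₀ λ ≤ 1, such that for every γ ∈ [0, γ₀] the matrix B + γC is invertible and for every μ with 0 < μ ≤ μ₀ one has ‖I − μ (B + γC)⁻¹ A‖₂ ≤ 1 − μλ < 1. -/
/-!
By compactness of the unit sphere, the quadratic form of `B⁻¹A` is bounded below:
`⟪x, B⁻¹A x⟫ ≥ δ‖x‖²` for some `δ > 0`. Inversion is continuous at the unit `B`, so for small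
`γ` the matrix `B + γC` is invertible and `(B + γC)⁻¹A` lies within `δ/2` of `B⁻¹A` in operator
norm; its quadratic form is then bounded below by `δ/2`. Finally, if `⟪x, Tx⟫ ≥ ε‖x‖²` and
`‖T‖ ≤ K`, expanding `‖x - μTx‖²` gives `‖I - μT‖² ≤ 1 - 2με + μ²K² ≤ 1 - με ≤ (1 - με/2)²`
as soon as `μ ≤ ε/K²`.
-/
open Matrix

/-- The Euclidean norm of a vector. -/
noncomputable def euclNorm {ι : Type*} [Fintype ι] (v : ι → ℝ) : ℝ :=
  Real.sqrt (∑ i, (v i) ^ 2)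

/-- The matrix norm induced by the Euclidean (ℓ²) vector norm. -/
noncomputable def l2OpNorm {n : ℕ} (P : Matrix (Fin n) (Fin n) ℝ) : ℝ :=
  ‖(Matrix.toEuclideanCLM (𝕜 := ℝ) P)‖

open Filter Topology
open scoped RealInnerProductSpace

section Coercive

variable {E : Type*} [NormedAddCommGroup E] [InnerProductSpace ℝ E]

theorem ContinuousLinearMap.exists_pos_le_inner_of_inner_pos [FiniteDimensional ℝ E]
    (T : E →L[ℝ] E) (hT : ∀ x : E, ‖x‖ = 1 → 0 < ⟪x, T x⟫) :
    ∃ δ > 0, ∀ x : E, δ * ‖x‖ ^ 2 ≤ ⟪x, T x⟫ := by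
  obtain ⟨δ, hδ, hδT⟩ := (isCompact_sphere (0 : E) 1).exists_forall_le'
    (continuous_id.inner T.continuous).continuousOn
    (fun x hx => hT x (mem_sphere_zero_iff_norm.mp hx))
  refine ⟨δ, hδ, fun x => ?_⟩
  rcases eq_or_ne x 0 with rfl | hx
  · simp
  have hnx : ‖x‖ ≠ 0 := norm_ne_zero_iff.mpr hx
  have hu : δ ≤ ⟪‖x‖⁻¹ • x, T (‖x‖⁻¹ • x)⟫ :=
    hδT _ (mem_sphere_zero_iff_norm.mpr (norm_smul_inv_norm hx))
  calc δ * ‖x‖ ^ 2 ≤ ‖x‖ ^ 2 * ⟪‖x‖⁻¹ • x, T (‖x‖⁻¹ • x)⟫ := by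
        rw [mul_comm]; gcongr
    _ = ⟪x, T x⟫ := by
        rw [map_smul, real_inner_smul_left, real_inner_smul_right]
        field_simp

theorem ContinuousLinearMap.sub_mul_sq_le_inner_of_norm_sub_le {T₀ T : E →L[ℝ] E} {δ η : ℝ}
    (hT₀ : ∀ x : E, δ * ‖x‖ ^ 2 ≤ ⟪x, T₀ x⟫) (hT : ‖T - T₀‖ ≤ η) (x : E) :
    (δ - η) * ‖x‖ ^ 2 ≤ ⟪x, T x⟫ := by
  have hdiff : |⟪x, (T - T₀) x⟫| ≤ η * ‖x‖ ^ 2 :=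
    calc |⟪x, (T - T₀) x⟫| ≤ ‖x‖ * ‖(T - T₀) x‖ := abs_real_inner_le_norm _ _
      _ ≤ ‖x‖ * (η * ‖x‖) := by gcongr; exact (T - T₀).le_of_opNorm_le hT x
      _ = η * ‖x‖ ^ 2 := by ring
  have hsplit : ⟪x, T x⟫ = ⟪x, T₀ x⟫ + ⟪x, (T - T₀) x⟫ := by
    rw [← inner_add_right, _root_.sub_apply, add_sub_cancel]
  linarith [hT₀ x, (abs_le.mp hdiff).1]

theorem ContinuousLinearMap.norm_one_sub_smul_le {T : E →L[ℝ] E} {ε K μ : ℝ}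
    (hT : ∀ x : E, ε * ‖x‖ ^ 2 ≤ ⟪x, T x⟫) (hTK : ‖T‖ ≤ K) (hε : 0 < ε) (hεK : ε ≤ K)
    (hμ : 0 ≤ μ) (hμK : μ ≤ ε / K ^ 2) :
    ‖1 - μ • T‖ ≤ 1 - μ * ε / 2 := by
  have hμK' : μ * K ^ 2 ≤ ε := (le_div_iff₀ (by nlinarith)).mp hμK
  have hμε : μ * ε ≤ 1 := by
    have : μ * ε * ε ≤ 1 * ε := by
      nlinarith [mul_le_mul_of_nonneg_left (pow_le_pow_left₀ hε.le hεK 2) hμ]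
    exact le_of_mul_le_mul_right this hε
  refine (1 - μ • T).opNorm_le_bound (by linarith) fun x => ?_
  refine (sq_le_sq₀ (norm_nonneg _) (by have := norm_nonneg x; nlinarith)).mp ?_
  have hTx : ‖T x‖ ^ 2 ≤ K ^ 2 * ‖x‖ ^ 2 := by
    rw [← mul_pow]; gcongr; exact T.le_of_opNorm_le hTK x
  calc ‖(1 - μ • T) x‖ ^ 2 = ‖x‖ ^ 2 - 2 * μ * ⟪x, T x⟫ + μ ^ 2 * ‖T x‖ ^ 2 := by
        rw [_root_.sub_apply, one_apply_eq_self, _root_.smul_apply, norm_sub_sq_real,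
          real_inner_smul_right, norm_smul, Real.norm_of_nonneg hμ]
        ring
    _ ≤ ‖x‖ ^ 2 - 2 * μ * (ε * ‖x‖ ^ 2) + μ ^ 2 * (K ^ 2 * ‖x‖ ^ 2) := by
        gcongr ?_ - 2 * μ * ?_ + μ ^ 2 * ?_
        · exact hT x
    _ ≤ ((1 - μ * ε / 2) * ‖x‖) ^ 2 := by
        nlinarith [mul_le_mul_of_nonneg_left hμK' (mul_nonneg hμ (sq_nonneg ‖x‖)),
          sq_nonneg (μ * ε * ‖x‖)]

theorem ContinuousLinearMap.exists_norm_one_sub_smul_le_of_norm_sub_le {T₀ : E →L[ℝ] E} {δ : ℝ}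
    (hδ : 0 < δ) (hT₀ : ∀ x : E, δ * ‖x‖ ^ 2 ≤ ⟪x, T₀ x⟫) :
    ∃ lam > 0, ∃ μ₀ > 0, μ₀ * lam ≤ 1 ∧ ∀ T : E →L[ℝ] E, ‖T - T₀‖ ≤ δ / 2 →
      ∀ μ, 0 < μ → μ ≤ μ₀ → ‖1 - μ • T‖ ≤ 1 - μ * lam := by
  obtain ⟨K, hK⟩ : ∃ K, K = ‖T₀‖ + δ / 2 := ⟨_, rfl⟩
  have hδK : δ / 2 ≤ K := by linarith [norm_nonneg T₀]
  have hKpos : 0 < K := by linarith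
  refine ⟨δ / 4, by positivity, δ / 2 / K ^ 2, by positivity, ?_, fun T hT μ hμ hμ₀ => ?_⟩
  · calc δ / 2 / K ^ 2 * (δ / 4) = (δ / 2) ^ 2 / (2 * K ^ 2) := by ring
      _ ≤ 1 := by
        rw [div_le_one (by positivity)]
        nlinarith
  have hTK : ‖T‖ ≤ K := by
    have h1 : ‖T‖ ≤ ‖T₀‖ + ‖T - T₀‖ := norm_le_norm_add_norm_sub' T T₀
    linarith
  have hTδ := sub_mul_sq_le_inner_of_norm_sub_le hT₀ hT
  rw [sub_half] at hTδ
  have := norm_one_sub_smul_le hTδ hTK (by positivity) hδK hμ.le hμ₀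
  linarith

end Coercive

section NormedRing

variable {𝕜 R : Type*} [NormedField 𝕜] [NormedRing R] [NormedSpace 𝕜 R] [HasSummableGeomSeries R]

theorem eventually_isUnit_and_tendsto_ringInverse_add_smul {b : R} (hb : IsUnit b) (c : R) :
    (∀ᶠ γ in 𝓝 (0 : 𝕜), IsUnit (b + γ • c)) ∧
      Tendsto (fun γ : 𝕜 => Ring.inverse (b + γ • c)) (𝓝 0) (𝓝 (Ring.inverse b)) := by
  have hline : Tendsto (fun γ : 𝕜 => b + γ • c) (𝓝 0) (𝓝 b) := by
    simpa using ((continuous_id.smul continuous_const).const_add b).tendsto (0 : 𝕜)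
  obtain ⟨u, rfl⟩ := hb
  exact ⟨hline (Units.isOpen.mem_nhds u.isUnit),
    (NormedRing.inverse_continuousAt u).tendsto.comp hline⟩

end NormedRing

theorem euclNorm_ofLp {n : Type*} [Fintype n] (x : EuclideanSpace ℝ n) :
    euclNorm x.ofLp = ‖x‖ := by
  simp [euclNorm, EuclideanSpace.norm_eq]

open scoped Matrix.Norms.L2Operator in
theorem Matrix.eventually_isUnit_add_smul_and_l2OpNorm_inv_mul_sub_lt {n : ℕ}
    {B : Matrix (Fin n) (Fin n) ℝ} (hB : IsUnit B) (C A : Matrix (Fin n) (Fin n) ℝ) {η : ℝ}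
    (hη : 0 < η) :
    ∀ᶠ γ in 𝓝 (0 : ℝ), IsUnit (B + γ • C) ∧ l2OpNorm ((B + γ • C)⁻¹ * A - B⁻¹ * A) < η := by
  obtain ⟨hunit, hinv⟩ := eventually_isUnit_and_tendsto_ringInverse_add_smul (𝕜 := ℝ) hB C
  simp only [← nonsing_inv_eq_ringInverse] at hinv
  have hclose := (hinv.mul_const A).eventually (Metric.ball_mem_nhds _ hη)
  filter_upwards [hunit, hclose] with γ hγ hγη
  exact ⟨hγ, by rwa [dist_eq_norm] at hγη⟩

theorem lemma1_part2_existence_general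
    {M : ℕ} (A B C : Matrix (Fin M) (Fin M) ℝ)
    (hBinv : IsUnit B)
    (hBA : ∀ x : Fin M → ℝ, euclNorm x = 1 → 0 < x ⬝ᵥ (B⁻¹ * A).mulVec x) :
    ∃ γ₀ : ℝ, 0 < γ₀ ∧ ∃ lam : ℝ, 0 < lam ∧ ∃ μ₀ : ℝ, 0 < μ₀ ∧ μ₀ * lam ≤ 1 ∧
      ∀ γ : ℝ, 0 ≤ γ → γ ≤ γ₀ →
        IsUnit (B + γ • C) ∧
        ∀ μ : ℝ, 0 < μ → μ ≤ μ₀ →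
          l2OpNorm (1 - μ • ((B + γ • C)⁻¹ * A)) ≤ 1 - μ * lam ∧ 1 - μ * lam < 1 := by
  obtain ⟨δ, hδ, hcoercive⟩ :=
    (toEuclideanCLM (𝕜 := ℝ) (B⁻¹ * A)).exists_pos_le_inner_of_inner_pos fun x hx => by
      simpa [inner_toEuclideanCLM] using hBA x.ofLp (by rw [euclNorm_ofLp, hx])
  obtain ⟨lam, hlam, μ₀, hμ₀, hμ₀lam, hcontract⟩ :=
    ContinuousLinearMap.exists_norm_one_sub_smul_le_of_norm_sub_le hδ hcoercive
  obtain ⟨r, hr, hnear⟩ := Metric.eventually_nhds_iff.mp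
    (eventually_isUnit_add_smul_and_l2OpNorm_inv_mul_sub_lt hBinv C A (half_pos hδ))
  refine ⟨r / 2, half_pos hr, lam, hlam, μ₀, hμ₀, hμ₀lam, fun γ hγ hγr => ?_⟩
  obtain ⟨hunit, hclose⟩ := hnear (by rw [Real.dist_0_eq_abs, abs_of_nonneg hγ]; linarith)
  refine ⟨hunit, fun μ hμ hμμ₀ => ⟨?_, by linarith [mul_pos hμ hlam]⟩⟩
  have := hcontract _ (by rw [← map_sub]; exact hclose.le) μ hμ hμμ₀
  rwa [← map_one (toEuclideanCLM (𝕜 := ℝ)), ← map_smul, ← map_sub] at this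

/-- Lemma 1, part 2, existence form: there exist `γ₀ > 0`, `λ > 0`, `μ₀ > 0`
with `μ₀ λ ≤ 1` such that for all `γ ∈ [0, γ₀]`, `B + γC` is invertible and for all
`0 < μ ≤ μ₀`, `‖I − μ (B + γC)⁻¹ A‖₂ ≤ 1 − μλ < 1`. -/
theorem lemma1_part2_existence
    {M : ℕ} (A B C : Matrix (Fin M) (Fin M) ℝ)
    (hA : A.PosDef)
    (hBsymm : B.IsSymm) (hBinv : IsUnit B)
    (hBA : ∀ x : Fin M → ℝ, euclNorm x = 1 → 0 < x ⬝ᵥ (B⁻¹ * A).mulVec x)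
    (hC : C.PosSemidef) :
    ∃ γ₀ : ℝ, 0 < γ₀ ∧ ∃ lam : ℝ, 0 < lam ∧ ∃ μ₀ : ℝ, 0 < μ₀ ∧ μ₀ * lam ≤ 1 ∧
      ∀ γ : ℝ, 0 ≤ γ → γ ≤ γ₀ →
        IsUnit (B + γ • C) ∧
        ∀ μ : ℝ, 0 < μ → μ ≤ μ₀ →
          l2OpNorm (1 - μ • ((B + γ • C)⁻¹ * A)) ≤ 1 - μ * lam ∧ 1 - μ * lam < 1 :=
  lemma1_part2_existence_general A B C hBinv hBA
end

section
/- (Lemma 1, part 2, explicit constants.) Let P be a real M×M matrix such that λ_min := min_{‖x‖=1} xᵀ P x > 0, let λ_max := ‖P‖₂, and set τ := λ_max / λ_min. Suppose τ > 1, and define λ := λ_max τ (1 − √(1 − τ⁻²)) and μ₀ := 1/(τ λ_max). Then 0 < λ < λ_min, μ₀ λ = 1 − √(1 − τ⁻²) ≤ 1, and for every μ with 0 < μ ≤ μ₀ one has ‖I − μP‖₂ ≤ 1 − μλ. -/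
open Matrix
open scoped RealInnerProductSpace

private lemma euclNorm_eq_norm {M : ℕ} (v : Fin M → ℝ) :
    euclNorm v = ‖(WithLp.equiv 2 (Fin M → ℝ)).symm v‖ := by
  rw [euclNorm, EuclideanSpace.norm_eq]
  simp [Real.norm_eq_abs, sq_abs]

private lemma dot_eq_inner {M : ℕ} (v w : Fin M → ℝ) :
    v ⬝ᵥ w = ⟪(WithLp.equiv 2 (Fin M → ℝ)).symm v, (WithLp.equiv 2 (Fin M → ℝ)).symm w⟫ := by
  rw [PiLp.inner_apply]
  simp [dotProduct, mul_comm]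

/-- Coercivity extended from unit vectors to all vectors by scaling. -/
private lemma coercive_all {M : ℕ} (P : Matrix (Fin M) (Fin M) ℝ) (lmin : ℝ)
    (hlb : ∀ y ∈ {y : ℝ | ∃ x : Fin M → ℝ, euclNorm x = 1 ∧ y = x ⬝ᵥ P.mulVec x}, lmin ≤ y)
    (v : Fin M → ℝ) : lmin * euclNorm v ^ 2 ≤ v ⬝ᵥ P.mulVec v := by
  rcases eq_or_ne v 0 with rfl | hv
  · simp [euclNorm]
  · have hc : 0 < euclNorm v := by
      rw [euclNorm_eq_norm]
      have : (WithLp.equiv 2 (Fin M → ℝ)).symm v ≠ 0 := by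
        simpa using hv
      exact norm_pos_iff.mpr this
    set c := euclNorm v with hcdef
    have hw1 : euclNorm (c⁻¹ • v) = 1 := by
      rw [euclNorm_eq_norm]
      have : (WithLp.equiv 2 (Fin M → ℝ)).symm (c⁻¹ • v)
          = c⁻¹ • (WithLp.equiv 2 (Fin M → ℝ)).symm v := rfl
      rw [this, norm_smul, Real.norm_eq_abs, abs_of_pos (inv_pos.mpr hc), ← euclNorm_eq_norm,
        ← hcdef, inv_mul_cancel₀ hc.ne']
    have hle := hlb _ ⟨c⁻¹ • v, hw1, rfl⟩
    have hdot : (c⁻¹ • v) ⬝ᵥ P.mulVec (c⁻¹ • v) = c⁻¹ * c⁻¹ * (v ⬝ᵥ P.mulVec v) := by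
      rw [mulVec_smul, smul_dotProduct, dotProduct_smul, smul_eq_mul, smul_eq_mul]
      ring
    rw [hdot] at hle
    have hc2 : 0 < c ^ 2 := by positivity
    calc lmin * c ^ 2 ≤ (c⁻¹ * c⁻¹ * (v ⬝ᵥ P.mulVec v)) * c ^ 2 := by
          exact mul_le_mul_of_nonneg_right hle hc2.le
      _ = (c⁻¹ * c) ^ 2 * (v ⬝ᵥ P.mulVec v) := by ring
      _ = v ⬝ᵥ P.mulVec v := by rw [inv_mul_cancel₀ hc.ne']; ring

set_option maxHeartbeats 1000000 in
/-- Lemma 1, part 2, explicit constants: with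
`λ_min = min_{‖x‖=1} xᵀPx > 0`, `λ_max = ‖P‖₂`, `τ = λ_max/λ_min > 1`,
`λ = λ_max τ (1 − √(1 − τ⁻²))`, `μ₀ = 1/(τ λ_max)`, one has `0 < λ < λ_min`,
`μ₀ λ = 1 − √(1 − τ⁻²) ≤ 1`, and `‖I − μP‖₂ ≤ 1 − μλ` for all `0 < μ ≤ μ₀`. -/
theorem lemma1_part2_explicit_constants
    {M : ℕ} (P : Matrix (Fin M) (Fin M) ℝ)
    (lmin : ℝ)
    (hlmin : IsLeast {y : ℝ | ∃ x : Fin M → ℝ, euclNorm x = 1 ∧ y = x ⬝ᵥ P.mulVec x} lmin)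
    (hlminpos : 0 < lmin)
    (τ lam μ₀ : ℝ)
    (hτ : τ = l2OpNorm P / lmin) (hτ1 : 1 < τ)
    (hlam : lam = l2OpNorm P * τ * (1 - Real.sqrt (1 - (τ ^ 2)⁻¹)))
    (hμ₀ : μ₀ = 1 / (τ * l2OpNorm P)) :
    0 < lam ∧ lam < lmin ∧
    μ₀ * lam = 1 - Real.sqrt (1 - (τ ^ 2)⁻¹) ∧ μ₀ * lam ≤ 1 ∧
    ∀ μ : ℝ, 0 < μ → μ ≤ μ₀ → l2OpNorm (1 - μ • P) ≤ 1 - μ * lam := by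
  have hτpos : (0:ℝ) < τ := lt_trans one_pos hτ1
  have hτ2 : (1:ℝ) < τ ^ 2 := by nlinarith
  have harg : 0 < 1 - (τ ^ 2)⁻¹ := by
    have : (τ ^ 2)⁻¹ < 1 := by
      rw [inv_lt_one_iff₀]; right; exact hτ2
    linarith
  set s := Real.sqrt (1 - (τ ^ 2)⁻¹) with hsdef
  have hs0 : 0 < s := Real.sqrt_pos.mpr harg
  have hs2 : s ^ 2 = 1 - (τ ^ 2)⁻¹ := Real.sq_sqrt harg.le
  have hs2' : τ ^ 2 * s ^ 2 = τ ^ 2 - 1 := by rw [hs2]; field_simp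
  have hs1 : s < 1 := by nlinarith [hs2, harg, sq_nonneg (s - 1)]
  have hlmax : τ * lmin = l2OpNorm P := (eq_div_iff hlminpos.ne').mp hτ
  have hlmaxpos : 0 < l2OpNorm P := by rw [← hlmax]; positivity
  have hlamval : lam = τ * lmin * τ * (1 - s) := by rw [hlam, ← hlmax]
  have hlampos : 0 < lam := by
    rw [hlamval]
    have : 0 < 1 - s := by linarith
    positivity
  have hlamlt : lam < lmin := by
    rw [hlamval]
    nlinarith [mul_pos (mul_pos (mul_pos hτpos hτpos) hs0) (by linarith : (0:ℝ) < 1 - s)]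
  have hμ₀lam : μ₀ * lam = 1 - s := by
    rw [hμ₀, hlamval, ← hlmax]
    field_simp
  refine ⟨hlampos, hlamlt, hμ₀lam, by rw [hμ₀lam]; linarith, ?_⟩
  intro μ hμpos hμle
  have hμ₀pos : 0 < μ₀ := by rw [hμ₀]; positivity
  -- scalar bound μ * τ² * lmin ≤ 1
  have hμ' : μ * (τ ^ 2 * lmin) ≤ 1 := by
    have h1 : 0 < τ * l2OpNorm P := by positivity
    have h2 : μ ≤ 1 / (τ * l2OpNorm P) := hμ₀ ▸ hμle
    rw [le_div_iff₀ h1] at h2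
    have : μ * (τ * l2OpNorm P) ≤ 1 := h2
    calc μ * (τ ^ 2 * lmin) = μ * (τ * l2OpNorm P) := by rw [← hlmax]; ring
      _ ≤ 1 := by linarith
  -- key quadratic inequality on scalars
  have hident : (τ * lmin) ^ 2 - lam ^ 2 = 2 * (lmin - lam) * (τ ^ 2 * lmin) := by
    rw [hlamval]
    linear_combination (-(τ ^ 2 * lmin ^ 2)) * hs2'
  have hkey : 1 - 2 * μ * lmin + μ ^ 2 * (τ * lmin) ^ 2 ≤ (1 - μ * lam) ^ 2 := by
    nlinarith [mul_nonneg (mul_nonneg hμpos.le (by linarith : (0:ℝ) ≤ lmin - lam))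
      (by linarith : (0:ℝ) ≤ 1 - μ * (τ ^ 2 * lmin)), hident]
  have hnn : 0 ≤ 1 - μ * lam := by
    have : μ * lam ≤ μ₀ * lam := mul_le_mul_of_nonneg_right hμle hlampos.le
    rw [hμ₀lam] at this
    linarith
  -- now the operator norm bound
  set T := Matrix.toEuclideanCLM (𝕜 := ℝ) P with hT
  have hmap : Matrix.toEuclideanCLM (𝕜 := ℝ) (1 - μ • P) = 1 - μ • T := by
    simp [map_sub, _root_.map_smul, hT]
  unfold l2OpNorm
  rw [hmap]
  refine ContinuousLinearMap.opNorm_le_bound _ hnn ?_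
  intro x
  have hinner : lmin * ‖x‖ ^ 2 ≤ ⟪x, T x⟫ := by
    have h1 := coercive_all P lmin hlmin.2 (WithLp.equiv 2 (Fin M → ℝ) x)
    rw [dot_eq_inner, euclNorm_eq_norm] at h1
    exact h1
  have hTx : ‖T x‖ ≤ τ * lmin * ‖x‖ := by
    rw [hlmax]
    exact T.le_opNorm x
  have hexp : ‖x - μ • T x‖ ^ 2
      = ‖x‖ ^ 2 - 2 * (μ * ⟪x, T x⟫) + (μ * ‖T x‖) ^ 2 := by
    rw [norm_sub_sq_real, real_inner_smul_right, norm_smul, Real.norm_eq_abs,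
      abs_of_pos hμpos]
  have happ : (1 - μ • T) x = x - μ • T x := rfl
  rw [happ]
  have hsq : ‖x - μ • T x‖ ^ 2 ≤ ((1 - μ * lam) * ‖x‖) ^ 2 := by
    rw [hexp]
    nlinarith [mul_le_mul_of_nonneg_right hkey (sq_nonneg ‖x‖),
      mul_self_le_mul_self (norm_nonneg (T x)) hTx,
      mul_le_mul_of_nonneg_left hinner (mul_pos hμpos hμpos).le,
      mul_le_mul_of_nonneg_left hinner hμpos.le, sq_nonneg ‖x‖, norm_nonneg (T x),
      norm_nonneg x]
  have := Real.sqrt_le_sqrt hsq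
  rwa [Real.sqrt_sq (norm_nonneg _), Real.sqrt_sq (by positivity)] at this
end

section
/- (Theorem 1.) There exist γ₀ > 0 and μ₀ > 0 such that for every γ ∈ [0, γ₀] (so B + γC is invertible) and every step-size sequence (μ_k)_{k≥1} with 0 < μ_k ≤ μ₀ for all k and Σ_{k=1}^∞ μ_k = ∞, the error process satisfies lim_{k→∞} E[e^k] = 0. -/
/-!
Taking expectations, independence removes the noise: the mean `m_k = E[e^k]` obeys
`m_k = (I - μ_k Ψ_γ A) m_{k-1}`. At `γ = 0` the matrix `Ψ_0 A = B⁻¹ A` is coercive on the unit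
sphere; by compactness of the sphere the coercivity constant (halved) and a Frobenius bound `L`
persist for all small `γ`. A step `μ_k ≤ c / L` then shrinks `|m|²` by the factor
`1 - c μ_k ≤ exp (-c μ_k)`, and `Σ μ_k = ∞` drives `|m_k|²` to `0`.
-/

open MeasureTheory ProbabilityTheory Matrix Filter

/-- Measurable-space structure on matrices (entrywise). -/
instance matrixMeasurableSpace {m n α : Type*} [MeasurableSpace α] :
    MeasurableSpace (Matrix m n α) := MeasurableSpace.pi (X := fun _ : m => n → α)

/-- The Frobenius norm of a matrix. -/
noncomputable def frobNorm {ι κ : Type*} [Fintype ι] [Fintype κ] (F : Matrix ι κ ℝ) : ℝ :=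
  Real.sqrt (∑ i, ∑ j, (F i j) ^ 2)

/-- Entrywise expectation of a random vector. -/
noncomputable def Evec {Ω' : Type*} [MeasurableSpace Ω'] (P : Measure Ω') {ι : Type*}
    (F : Ω' → ι → ℝ) : ι → ℝ := fun i => ∫ ω, F ω i ∂P

/-- Entrywise expectation of a random matrix. -/
noncomputable def Emat {Ω' : Type*} [MeasurableSpace Ω'] (P : Measure Ω') {ι κ : Type*}
    (F : Ω' → Matrix ι κ ℝ) : Matrix ι κ ℝ := Matrix.of fun i j => ∫ ω, F ω i j ∂P

/-- Entrywise integrability of a random vector. -/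
def IntV {Ω' : Type*} [MeasurableSpace Ω'] (P : Measure Ω') {ι : Type*}
    (F : Ω' → ι → ℝ) : Prop := ∀ i, Integrable (fun ω => F ω i) P

/-- Entrywise integrability of a random matrix. -/
def IntM {Ω' : Type*} [MeasurableSpace Ω'] (P : Measure Ω') {ι κ : Type*}
    (F : Ω' → Matrix ι κ ℝ) : Prop := ∀ i j, Integrable (fun ω => F ω i j) P

/-- `vec(P) vec(Q)ᵀ`, with `vec` stacking the columns of a square matrix. -/
def vecOuter {M : ℕ} (P Q : Matrix (Fin M) (Fin M) ℝ) :
    Matrix (Fin M × Fin M) (Fin M × Fin M) ℝ :=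
  Matrix.of fun p q => P p.1 p.2 * Q q.1 q.2

/-- `vec(P) vᵀ` for a square matrix `P` and a vector `v`. -/
def vecOuterVec {M : ℕ} (P : Matrix (Fin M) (Fin M) ℝ) (v : Fin M → ℝ) :
    Matrix (Fin M × Fin M) (Fin M) ℝ :=
  Matrix.of fun p i => P p.1 p.2 * v i

open Topology

section LinAlg

variable {m n : Type*} [Fintype m] [Fintype n]

lemma sq_le_dotProduct_self (v : n → ℝ) (i : n) : v i ^ 2 ≤ v ⬝ᵥ v := by
  simpa [dotProduct, sq] using
    Finset.single_le_sum (fun j _ => mul_self_nonneg (v j)) (Finset.mem_univ i)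

lemma norm_le_sqrt_dotProduct_self (v : n → ℝ) : ‖v‖ ≤ √(v ⬝ᵥ v) :=
  (pi_norm_le_iff_of_nonneg (Real.sqrt_nonneg _)).2 fun i =>
    Real.abs_le_sqrt (sq_le_dotProduct_self v i)

lemma mulVec_dotProduct_mulVec_le (G : Matrix m n ℝ) (v : n → ℝ) :
    (G *ᵥ v) ⬝ᵥ (G *ᵥ v) ≤ frobNorm G ^ 2 * (v ⬝ᵥ v) := by
  rw [frobNorm, Real.sq_sqrt (by positivity), Finset.sum_mul]
  refine Finset.sum_le_sum fun i _ => ?_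
  simpa [mulVec, dotProduct, sq] using Finset.sum_mul_sq_le_sq_mul_sq Finset.univ (G i) v

lemma mul_dotProduct_self_le_of_forall_unit {G : Matrix n n ℝ} {c : ℝ}
    (h : ∀ u : n → ℝ, u ⬝ᵥ u = 1 → c ≤ u ⬝ᵥ G *ᵥ u) (v : n → ℝ) :
    c * (v ⬝ᵥ v) ≤ v ⬝ᵥ G *ᵥ v := by
  rcases eq_or_ne v 0 with rfl | hv
  · simp
  have hpos : 0 < v ⬝ᵥ v := lt_of_le_of_ne (dotProduct_star_self_nonneg v)
    (Ne.symm (dotProduct_self_eq_zero.not.2 hv))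
  set r := √(v ⬝ᵥ v)
  have hr : 0 < r := Real.sqrt_pos.2 hpos
  have hr2 : r ^ 2 = v ⬝ᵥ v := Real.sq_sqrt hpos.le
  have hu := h (r⁻¹ • v) (by
    rw [smul_dotProduct, dotProduct_smul, smul_smul, smul_eq_mul, ← hr2]
    field_simp)
  rw [mulVec_smul, smul_dotProduct, dotProduct_smul, smul_smul, smul_eq_mul] at hu
  rw [← hr2]
  have : v ⬝ᵥ G *ᵥ v = r ^ 2 * (r⁻¹ * r⁻¹ * v ⬝ᵥ G *ᵥ v) := by field_simp
  rw [this, mul_comm c]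
  exact mul_le_mul_of_nonneg_left hu (sq_nonneg r)

end LinAlg

lemma dotProduct_self_one_sub_smul_mulVec_le {n : Type*} [Fintype n] [DecidableEq n]
    {G : Matrix n n ℝ} {c L μ : ℝ}
    (hcoer : ∀ v, c * (v ⬝ᵥ v) ≤ v ⬝ᵥ G *ᵥ v) (hbdd : ∀ v, (G *ᵥ v) ⬝ᵥ (G *ᵥ v) ≤ L * (v ⬝ᵥ v))
    (hμ : 0 ≤ μ) (hμL : μ * L ≤ c) (v : n → ℝ) :
    ((1 - μ • G) *ᵥ v) ⬝ᵥ ((1 - μ • G) *ᵥ v) ≤ (1 - μ * c) * (v ⬝ᵥ v) := by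
  have hexpand : ((1 - μ • G) *ᵥ v) ⬝ᵥ ((1 - μ • G) *ᵥ v)
      = v ⬝ᵥ v - 2 * μ * (v ⬝ᵥ G *ᵥ v) + μ ^ 2 * ((G *ᵥ v) ⬝ᵥ (G *ᵥ v)) := by
    simp only [sub_mulVec, one_mulVec, smul_mulVec, sub_dotProduct, dotProduct_sub,
      smul_dotProduct, dotProduct_smul, smul_eq_mul, dotProduct_comm (G *ᵥ v) v]
    ring
  have hv : 0 ≤ v ⬝ᵥ v := dotProduct_star_self_nonneg v
  rw [hexpand]
  nlinarith [mul_le_mul_of_nonneg_left (hcoer v) hμ,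
    mul_le_mul_of_nonneg_left (hbdd v) (sq_nonneg μ),
    mul_le_mul_of_nonneg_right (mul_le_mul_of_nonneg_left hμL hμ) hv]

lemma le_mul_exp_neg_sum {s a : ℕ → ℝ} (hs : ∀ k, 0 ≤ s k)
    (hrec : ∀ k, s (k + 1) ≤ (1 - a k) * s k) (n : ℕ) :
    s n ≤ s 0 * Real.exp (-∑ k ∈ Finset.range n, a k) := by
  induction n with
  | zero => simp
  | succ n ih =>
    calc s (n + 1) ≤ (1 - a n) * s n := hrec n
      _ ≤ Real.exp (-a n) * (s 0 * Real.exp (-∑ k ∈ Finset.range n, a k)) :=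
        mul_le_mul (by linarith [Real.add_one_le_exp (-a n)]) ih (hs n) (Real.exp_pos _).le
      _ = s 0 * Real.exp (-∑ k ∈ Finset.range (n + 1), a k) := by
        rw [Finset.sum_range_succ, neg_add, Real.exp_add]; ring

lemma tendsto_zero_of_le_one_sub_mul {s a : ℕ → ℝ} (hs : ∀ k, 0 ≤ s k) (ha : ∀ k, 0 ≤ a k)
    (hrec : ∀ k, s (k + 1) ≤ (1 - a k) * s k) (hdiv : ¬ Summable a) :
    Tendsto s atTop (𝓝 0) := by
  have hsum : Tendsto (fun n => ∑ k ∈ Finset.range n, a k) atTop atTop :=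
    (not_summable_iff_tendsto_nat_atTop_of_nonneg ha).1 hdiv
  have hexp : Tendsto (fun n => s 0 * Real.exp (-∑ k ∈ Finset.range n, a k)) atTop (𝓝 0) := by
    simpa using (Real.tendsto_exp_atBot.comp (tendsto_neg_atTop_atBot.comp hsum)).const_mul (s 0)
  exact squeeze_zero hs (le_mul_exp_neg_sum hs hrec) hexp

lemma tendsto_zero_of_dotProduct_self {ι : Type*} {n : Type*} [Fintype n] {l : Filter ι}
    {m : ι → n → ℝ} (h : Tendsto (fun k => m k ⬝ᵥ m k) l (𝓝 0)) : Tendsto m l (𝓝 0) := by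
  refine squeeze_zero_norm (fun k => norm_le_sqrt_dotProduct_self (m k)) ?_
  simpa using h.sqrt

lemma tendsto_zero_of_mulVec_contraction {n : Type*} [Fintype n] [DecidableEq n]
    {G : Matrix n n ℝ} {c L : ℝ} (hc : 0 < c)
    (hcoer : ∀ v, c * (v ⬝ᵥ v) ≤ v ⬝ᵥ G *ᵥ v) (hbdd : ∀ v, (G *ᵥ v) ⬝ᵥ (G *ᵥ v) ≤ L * (v ⬝ᵥ v))
    {μ : ℕ → ℝ} (hμ : ∀ k, 0 ≤ μ k ∧ μ k * L ≤ c) (hdiv : ¬ Summable μ)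
    {m : ℕ → n → ℝ} (hm : ∀ k, m (k + 1) = (1 - μ k • G) *ᵥ m k) :
    Tendsto m atTop (𝓝 0) := by
  refine tendsto_zero_of_dotProduct_self (tendsto_zero_of_le_one_sub_mul (a := fun k => c * μ k)
    (fun k => dotProduct_star_self_nonneg (m k)) (fun k => mul_nonneg hc.le (hμ k).1)
    (fun k => ?_) ((summable_mul_left_iff hc.ne').not.2 hdiv))
  rw [hm, mul_comm c]
  exact dotProduct_self_one_sub_smul_mulVec_le hcoer hbdd (hμ k).1 (hμ k).2 (m k)

section Perturbation

variable {X : Type*} [TopologicalSpace X] {n : Type*} [Fintype n] {G : X → Matrix n n ℝ} {x₀ : X}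

lemma isCompact_dotProduct_self_eq_one : IsCompact {v : n → ℝ | v ⬝ᵥ v = 1} := by
  refine Metric.isCompact_of_isClosed_isBounded
    (isClosed_eq (continuous_id.dotProduct continuous_id) continuous_const) ?_
  refine isBounded_iff_forall_norm_le.2 ⟨1, fun v (hv : v ⬝ᵥ v = 1) => ?_⟩
  simpa [hv] using norm_le_sqrt_dotProduct_self v

lemma exists_pos_eventually_coercive (hG : ContinuousAt G x₀)
    (hpos : ∀ v : n → ℝ, v ⬝ᵥ v = 1 → 0 < v ⬝ᵥ G x₀ *ᵥ v) :
    ∃ c > 0, ∀ᶠ x in 𝓝 x₀, ∀ v, c * (v ⬝ᵥ v) ≤ v ⬝ᵥ G x *ᵥ v := by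
  have hquad : Continuous fun p : Matrix n n ℝ × (n → ℝ) => p.2 ⬝ᵥ p.1 *ᵥ p.2 :=
    continuous_snd.dotProduct (continuous_fst.matrix_mulVec continuous_snd)
  obtain ⟨c, hc, hcK⟩ := isCompact_dotProduct_self_eq_one.exists_forall_le'
    (hquad.comp (continuous_const.prodMk continuous_id)).continuousOn hpos
  refine ⟨c / 2, by positivity, ?_⟩
  have hsphere : ∀ᶠ x in 𝓝 x₀, ∀ v ∈ {v : n → ℝ | v ⬝ᵥ v = 1}, c / 2 ≤ v ⬝ᵥ G x *ᵥ v := by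
    refine isCompact_dotProduct_self_eq_one.eventually_forall_of_forall_eventually fun v hv => ?_
    have hcont : ContinuousAt (fun z : X × (n → ℝ) => z.2 ⬝ᵥ G z.1 *ᵥ z.2) (x₀, v) :=
      hquad.continuousAt.comp ((hG.comp continuousAt_fst).prodMk continuousAt_snd)
    exact (hcont.eventually (lt_mem_nhds (show c / 2 < v ⬝ᵥ G x₀ *ᵥ v by
      linarith [show c ≤ v ⬝ᵥ G x₀ *ᵥ v from hcK v hv]))).mono fun _ h => h.le
  exact hsphere.mono fun x hx => mul_dotProduct_self_le_of_forall_unit hx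

lemma exists_pos_eventually_mulVec_bounded (hG : ContinuousAt G x₀) :
    ∃ L > 0, ∀ᶠ x in 𝓝 x₀, ∀ v, (G x *ᵥ v) ⬝ᵥ (G x *ᵥ v) ≤ L * (v ⬝ᵥ v) := by
  have hfrob : Continuous (frobNorm : Matrix n n ℝ → ℝ) := by
    unfold frobNorm; fun_prop
  refine ⟨(frobNorm (G x₀) + 1) ^ 2, by unfold frobNorm; positivity, ?_⟩
  filter_upwards [(hfrob.continuousAt.comp hG).eventually (gt_mem_nhds (lt_add_one _))]
    with x hx v
  refine (mulVec_dotProduct_mulVec_le _ v).trans ?_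
  gcongr
  · exact dotProduct_star_self_nonneg v
  · exact Real.sqrt_nonneg _
  · exact hx.le

end Perturbation

section Resolvent

variable {n : Type*} [Fintype n] [DecidableEq n] {B : Matrix n n ℝ}

lemma continuousAt_inv_add_smul (hB : IsUnit B) (C : Matrix n n ℝ) :
    ContinuousAt (fun γ : ℝ => (B + γ • C)⁻¹) 0 := by
  have hinv : ContinuousAt Inv.inv B :=
    continuousAt_matrix_inv B (NormedRing.inverse_continuousAt
      ((isUnit_iff_isUnit_det B).1 hB).unit)
  exact ContinuousAt.comp (by simpa using hinv) (by fun_prop)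

lemma eventually_isUnit_add_smul (hB : IsUnit B) (C : Matrix n n ℝ) :
    ∀ᶠ γ in 𝓝 (0 : ℝ), IsUnit (B + γ • C) := by
  have hdet : Tendsto (fun γ : ℝ => (B + γ • C).det) (𝓝 0) (𝓝 B.det) := by
    simpa using (show Continuous fun γ : ℝ => (B + γ • C).det by fun_prop).tendsto 0
  filter_upwards [hdet.eventually_ne ((isUnit_iff_isUnit_det B).1 hB).ne_zero] with γ hγ
  exact (isUnit_iff_isUnit_det _).2 hγ.isUnit

end Resolvent

section Expectation

variable {Ω : Type*} [MeasurableSpace Ω] {P : Measure Ω} {m n : Type*}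

lemma ProbabilityTheory.IndepFun.entry_apply {W : Ω → Matrix m n ℝ} {X : Ω → n → ℝ}
    (hind : IndepFun W X P) (i : m) (j : n) :
    IndepFun (fun ω => W ω i j) (fun ω => X ω j) P :=
  hind.comp ((measurable_pi_apply j).comp (measurable_pi_apply i)) (measurable_pi_apply j)

variable [Fintype n]

lemma Evec_eq_integral {F : Ω → n → ℝ} (hF : IntV P F) : Evec P F = ∫ ω, F ω ∂P :=
  funext fun i => (eval_integral hF i).symm

lemma MeasureTheory.Integrable.const_mulVec [Fintype m] (N : Matrix m n ℝ) {F : Ω → n → ℝ}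
    (hF : Integrable F P) : Integrable (fun ω => N *ᵥ F ω) P :=
  (Matrix.mulVecLin N).toContinuousLinearMap.integrable_comp hF

lemma integral_mulVec [Fintype m] (N : Matrix m n ℝ) {F : Ω → n → ℝ} (hF : Integrable F P) :
    ∫ ω, N *ᵥ F ω ∂P = N *ᵥ ∫ ω, F ω ∂P :=
  (Matrix.mulVecLin N).toContinuousLinearMap.integral_comp_comm hF

variable {W : Ω → Matrix m n ℝ} {X : Ω → n → ℝ}

lemma ProbabilityTheory.IndepFun.intV_mulVec (hind : IndepFun W X P) (hW : IntM P W)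
    (hX : IntV P X) :
    IntV P (fun ω => W ω *ᵥ X ω) := fun i =>
  integrable_finsetSum _ fun j _ => (hind.entry_apply i j).integrable_mul (hW i j) (hX j)

lemma ProbabilityTheory.IndepFun.Evec_mulVec (hind : IndepFun W X P) (hW : IntM P W)
    (hX : IntV P X) :
    Evec P (fun ω => W ω *ᵥ X ω) = Emat P W *ᵥ Evec P X := by
  funext i
  simp only [Evec, Emat, mulVec, dotProduct, of_apply]
  rw [integral_finsetSum _ fun j _ => by
    exact (hind.entry_apply i j).integrable_mul (hW i j) (hX j)]
  exact Finset.sum_congr rfl fun j _ => (hind.entry_apply i j).integral_fun_mul_eq_mul_integral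
    (hW i j).aestronglyMeasurable (hX j).aestronglyMeasurable

end Expectation

lemma Evec_eq_mulVec_Evec_of_recursion {Ω : Type*} [MeasurableSpace Ω] {P : Measure Ω}
    [IsFiniteMeasure P] {n : Type*} [Fintype n] [DecidableEq n] {Ψ A : Matrix n n ℝ}
    {u : n → ℝ} {μ : ℝ} {θ : Ω → n → ℝ} {W : Ω → Matrix n n ℝ} {e f : Ω → n → ℝ}
    (hθ : IntV P θ) (hθ0 : Evec P θ = 0) (hW : IntM P W) (hW0 : Emat P W = 0)
    (he : IntV P e) (hind : IndepFun (fun ω => (θ ω, W ω)) e P)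
    (hf : ∀ ω, f ω = (1 - μ • (Ψ * (A + W ω))) *ᵥ e ω + μ • Ψ *ᵥ (θ ω - W ω *ᵥ u)) :
    Evec P f = (1 - μ • (Ψ * A)) *ᵥ Evec P e := by
  -- `W (u + e)` is centred by independence, so the multiplicative noise becomes additive
  have hf' : f = fun ω => (1 - μ • (Ψ * A)) *ᵥ e ω + μ • Ψ *ᵥ (θ ω - W ω *ᵥ (u + e ω)) := by
    funext ω
    rw [hf ω]
    simp only [mul_add, smul_add, sub_mulVec, add_mulVec, smul_mulVec, mulVec_mulVec, mulVec_add,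
      mulVec_sub, smul_sub]
    abel
  have hind' : IndepFun W (fun ω => u + e ω) P :=
    hind.comp measurable_snd (measurable_const_add u)
  have hue : IntV P (fun ω => u + e ω) := fun i => (integrable_const _).add (he i)
  have hWue := hind'.intV_mulVec hW hue
  have hθ0' : ∫ ω, θ ω ∂P = 0 := by rw [← Evec_eq_integral hθ, hθ0]
  have hWue0 : ∫ ω, W ω *ᵥ (u + e ω) ∂P = 0 := by
    rw [← Evec_eq_integral hWue, hind'.Evec_mulVec hW hue, hW0, zero_mulVec]
  have hθi := integrable_pi_iff.2 hθ
  have hWuei := integrable_pi_iff.2 hWue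
  have hei := integrable_pi_iff.2 he
  have hnoisei : Integrable (fun ω => θ ω - W ω *ᵥ (u + e ω)) P := hθi.sub hWuei
  have hdrift : Integrable (fun ω => (1 - μ • (Ψ * A) : Matrix n n ℝ) *ᵥ e ω) P :=
    hei.const_mulVec _
  have hnoise : Integrable (fun ω => μ • Ψ *ᵥ (θ ω - W ω *ᵥ (u + e ω))) P :=
    (hnoisei.const_mulVec Ψ).smul μ
  have hsum : IntV P (fun ω => (1 - μ • (Ψ * A)) *ᵥ e ω + μ • Ψ *ᵥ (θ ω - W ω *ᵥ (u + e ω))) :=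
    integrable_pi_iff.1 (hdrift.add hnoise)
  rw [hf', Evec_eq_integral hsum, integral_add hdrift hnoise, integral_smul,
    integral_mulVec _ hei, integral_mulVec _ hnoisei, integral_sub hθi hWuei, hθ0', hWue0,
    Evec_eq_integral he]
  simp

lemma euclNorm_eq_sqrt_dotProduct {n : Type*} [Fintype n] (v : n → ℝ) :
    euclNorm v = √(v ⬝ᵥ v) := by
  simp [euclNorm, dotProduct, sq]

theorem theorem1_mean_convergence_general
    {M : ℕ} {Ω' : Type} [MeasurableSpace Ω'] (P : Measure Ω') [IsProbabilityMeasure P]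
    (A B C : Matrix (Fin M) (Fin M) ℝ)
    (hBinv : IsUnit B)
    (hBA : ∀ x : Fin M → ℝ, euclNorm x = 1 → 0 < x ⬝ᵥ (B⁻¹ * A).mulVec x)
    (uhat : Fin M → ℝ)
    (θ : ℕ → Ω' → Fin M → ℝ) (W : ℕ → Ω' → Matrix (Fin M) (Fin M) ℝ)
    (hθint : ∀ k, IntV P (θ k)) (hθmean : ∀ k, 1 ≤ k → Evec P (θ k) = 0)
    (hWint : ∀ k, IntM P (W k)) (hWmean : ∀ k, 1 ≤ k → Emat P (W k) = 0) :
    ∃ γ₀ : ℝ, 0 < γ₀ ∧ ∃ μ₀ : ℝ, 0 < μ₀ ∧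
      ∀ γ : ℝ, 0 ≤ γ → γ ≤ γ₀ →
        IsUnit (B + γ • C) ∧
        ∀ μ : ℕ → ℝ, (∀ k, 1 ≤ k → 0 < μ k ∧ μ k ≤ μ₀) →
          ¬ Summable (fun k : ℕ => μ (k + 1)) →
          ∀ e : ℕ → Ω' → Fin M → ℝ,
            (∀ k, 1 ≤ k → ∀ ω, e k ω =
                (1 - μ k • ((B + γ • C)⁻¹ * (A + W k ω))).mulVec (e (k - 1) ω)
                  + μ k • (B + γ • C)⁻¹.mulVec (θ k ω - (W k ω).mulVec uhat)) →
            (∀ k, 1 ≤ k →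
                IndepFun (fun ω => (θ k ω, W k ω)) (fun ω => e (k - 1) ω) P) →
            (∀ k, IntV P (e k)) →
            (∀ k, 1 ≤ k → IntV P (fun ω => (W k ω).mulVec (e (k - 1) ω))) →
            ∀ i : Fin M, Tendsto (fun k : ℕ => ∫ ω, e k ω i ∂P) atTop (nhds 0) := by
  set G : ℝ → Matrix (Fin M) (Fin M) ℝ := fun γ => (B + γ • C)⁻¹ * A
  have hG : ContinuousAt G 0 := (continuousAt_inv_add_smul hBinv C).mul continuousAt_const
  obtain ⟨c, hc, hcoer⟩ := exists_pos_eventually_coercive hG fun v hv => by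
    simpa [G] using hBA v (by rw [euclNorm_eq_sqrt_dotProduct, hv, Real.sqrt_one])
  obtain ⟨L, hL, hbdd⟩ := exists_pos_eventually_mulVec_bounded hG
  obtain ⟨γ₀, hγ₀, hgood⟩ := mem_nhdsGE_iff_exists_Icc_subset.1 (nhdsWithin_le_nhds
    ((eventually_isUnit_add_smul hBinv C).and (hcoer.and hbdd)))
  refine ⟨γ₀, hγ₀, c / L, by positivity, fun γ hγ0 hγ1 => ?_⟩
  obtain ⟨hunit, hcoerγ, hbddγ⟩ := hgood ⟨hγ0, hγ1⟩
  refine ⟨hunit, fun μ hμ hdiv e hrec hind heint _ i => ?_⟩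
  have hmean : ∀ k, Evec P (e (k + 1)) = (1 - μ (k + 1) • G γ) *ᵥ Evec P (e k) := fun k =>
    Evec_eq_mulVec_Evec_of_recursion (hθint _) (hθmean _ k.succ_pos) (hWint _)
      (hWmean _ k.succ_pos) (heint k) (hind _ k.succ_pos) (hrec _ k.succ_pos)
  have hsteps : ∀ k, 0 ≤ μ (k + 1) ∧ μ (k + 1) * L ≤ c := fun k =>
    ⟨(hμ _ k.succ_pos).1.le, (le_div_iff₀ hL).1 (hμ _ k.succ_pos).2⟩
  exact ((continuous_apply i).tendsto 0).comp (tendsto_zero_of_mulVec_contraction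
    (m := fun k => Evec P (e k)) hc hcoerγ hbddγ hsteps hdiv hmean)

/-- Theorem 1: there exist `γ₀ > 0` and `μ₀ > 0` such that for every
`γ ∈ [0, γ₀]` (so `B + γC` is invertible) and every step-size sequence with
`0 < μ_k ≤ μ₀` and `Σ μ_k = ∞`, the error process satisfies `lim_k E[e^k] = 0`. -/
theorem theorem1_mean_convergence
    {M : ℕ} {Ω' : Type} [MeasurableSpace Ω'] (P : Measure Ω') [IsProbabilityMeasure P]
    (A B C : Matrix (Fin M) (Fin M) ℝ)
    (hA : A.PosDef)
    (hBsymm : B.IsSymm) (hBinv : IsUnit B)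
    (hBA : ∀ x : Fin M → ℝ, euclNorm x = 1 → 0 < x ⬝ᵥ (B⁻¹ * A).mulVec x)
    (hC : C.PosSemidef)
    (uhat : Fin M → ℝ)
    (θ : ℕ → Ω' → Fin M → ℝ) (W : ℕ → Ω' → Matrix (Fin M) (Fin M) ℝ)
    (hWsymm : ∀ k ω, (W k ω).IsSymm)
    (hθint : ∀ k, IntV P (θ k)) (hθmean : ∀ k, 1 ≤ k → Evec P (θ k) = 0)
    (hWint : ∀ k, IntM P (W k)) (hWmean : ∀ k, 1 ≤ k → Emat P (W k) = 0) :
    ∃ γ₀ : ℝ, 0 < γ₀ ∧ ∃ μ₀ : ℝ, 0 < μ₀ ∧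
      ∀ γ : ℝ, 0 ≤ γ → γ ≤ γ₀ →
        IsUnit (B + γ • C) ∧
        ∀ μ : ℕ → ℝ, (∀ k, 1 ≤ k → 0 < μ k ∧ μ k ≤ μ₀) →
          ¬ Summable (fun k : ℕ => μ (k + 1)) →
          ∀ e : ℕ → Ω' → Fin M → ℝ,
            (∀ k, 1 ≤ k → ∀ ω, e k ω =
                (1 - μ k • ((B + γ • C)⁻¹ * (A + W k ω))).mulVec (e (k - 1) ω)
                  + μ k • (B + γ • C)⁻¹.mulVec (θ k ω - (W k ω).mulVec uhat)) →
            (∀ k, 1 ≤ k →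
                IndepFun (fun ω => (θ k ω, W k ω)) (fun ω => e (k - 1) ω) P) →
            (∀ k, IntV P (e k)) →
            (∀ k, 1 ≤ k → IntV P (fun ω => (W k ω).mulVec (e (k - 1) ω))) →
            ∀ i : Fin M, Tendsto (fun k : ℕ => ∫ ω, e k ω i ∂P) atTop (nhds 0) :=
  theorem1_mean_convergence_general P A B C hBinv hBA uhat θ W hθint hθmean hWint hWmean
end

section
/- (Lemma 3.) Let P and Q be random real M×M matrices and let v and w be random vectors in ℝ^M, defined on a common probability space, such that the pair (v, w) is independent of the pair (P, Q), and all entries of the products below are integrable. Then ‖E[P v wᵀ Q]‖_F ≤ ‖E[v wᵀ]‖_F · ‖E[vec(P) vec(Q)ᵀ]‖_F. -/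
open MeasureTheory ProbabilityTheory Matrix Filter

/-!
Entrywise, `(P S Q) i j = ∑ k l, S k l * (vec P vec Qᵀ) (i, k) (l, j)`, so `P v wᵀ Q` is a
bilinear contraction of `v wᵀ` against `vec(P) vec(Q)ᵀ`. Independence of the two factors lets the
expectation pass through the contraction, and Cauchy–Schwarz, applied to each entry, bounds the
Frobenius norm of a contraction by the product of the Frobenius norms of its arguments.
-/

open Finset

namespace Matrix

variable {ι κ m n : Type*} [Fintype m] [Fintype n]

def contract (S : Matrix m n ℝ) (T : Matrix (ι × m) (n × κ) ℝ) : Matrix ι κ ℝ :=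
  of fun i j => ∑ k, ∑ l, S k l * T (i, k) (l, j)

theorem contract_vecOuter {M : ℕ} (S P Q : Matrix (Fin M) (Fin M) ℝ) :
    contract S (vecOuter P Q) = P * S * Q := by
  ext i j
  simp only [contract, vecOuter, of_apply, mul_apply, sum_mul]
  rw [sum_comm]
  exact sum_congr rfl fun l _ => sum_congr rfl fun k _ => by ring

theorem sum_sum_mul_sq_le_sq_mul_sq (S T : Matrix m n ℝ) :
    (∑ k, ∑ l, S k l * T k l) ^ 2 ≤ (∑ k, ∑ l, S k l ^ 2) * ∑ k, ∑ l, T k l ^ 2 := by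
  simpa only [Fintype.sum_prod_type] using
    sum_mul_sq_le_sq_mul_sq univ (fun p : m × n => S p.1 p.2) (fun p => T p.1 p.2)

theorem frobNorm_contract_le [Fintype ι] [Fintype κ] (S : Matrix m n ℝ)
    (T : Matrix (ι × m) (n × κ) ℝ) : frobNorm (contract S T) ≤ frobNorm S * frobNorm T := by
  have hT : ∑ i, ∑ j, ∑ k, ∑ l, T (i, k) (l, j) ^ 2 = ∑ p, ∑ q, T p q ^ 2 := by
    simp only [Fintype.sum_prod_type]
    refine sum_congr rfl fun i _ => ?_
    rw [sum_comm]
    exact sum_congr rfl fun k _ => sum_comm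
  rw [frobNorm, frobNorm, frobNorm, ← Real.sqrt_mul (by positivity)]
  apply Real.sqrt_le_sqrt
  calc ∑ i, ∑ j, contract S T i j ^ 2
      ≤ ∑ i, ∑ j, (∑ k, ∑ l, S k l ^ 2) * ∑ k, ∑ l, T (i, k) (l, j) ^ 2 := by
        gcongr with i _ j _
        exact sum_sum_mul_sq_le_sq_mul_sq S fun k l => T (i, k) (l, j)
    _ = (∑ k, ∑ l, S k l ^ 2) * ∑ p, ∑ q, T p q ^ 2 := by
        simp only [← mul_sum, hT]

end Matrix

theorem measurable_matrix_entry {m n : Type*} (i : m) (j : n) :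
    Measurable fun A : Matrix m n ℝ => A i j :=
  (measurable_pi_apply j).comp (measurable_pi_apply i)

theorem measurable_vecMulVec {m n : Type*} :
    Measurable fun x : (m → ℝ) × (n → ℝ) => vecMulVec x.1 x.2 :=
  measurable_pi_lambda _ fun k => measurable_pi_lambda _ fun l =>
    ((measurable_pi_apply k).comp measurable_fst).mul ((measurable_pi_apply l).comp measurable_snd)

theorem measurable_vecOuter {M : ℕ} :
    Measurable fun x : Matrix (Fin M) (Fin M) ℝ × Matrix (Fin M) (Fin M) ℝ => vecOuter x.1 x.2 :=
  measurable_pi_lambda _ fun p => measurable_pi_lambda _ fun q =>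
    ((measurable_matrix_entry p.1 p.2).comp measurable_fst).mul
      ((measurable_matrix_entry q.1 q.2).comp measurable_snd)

theorem Emat_contract_of_indepFun {Ω ι κ m n : Type*} [Fintype m] [Fintype n]
    [MeasurableSpace Ω] {μ : Measure Ω} {S : Ω → Matrix m n ℝ}
    {T : Ω → Matrix (ι × m) (n × κ) ℝ} (hST : IndepFun S T μ) (hS : IntM μ S) (hT : IntM μ T) :
    Emat μ (fun ω => contract (S ω) (T ω)) = contract (Emat μ S) (Emat μ T) := by
  ext i j
  have hind (k : m) (l : n) : IndepFun (fun ω => S ω k l) (fun ω => T ω (i, k) (l, j)) μ :=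
    hST.comp (measurable_matrix_entry k l) (measurable_matrix_entry _ _)
  have hint (k : m) (l : n) : Integrable (fun ω => S ω k l * T ω (i, k) (l, j)) μ :=
    (hind k l).integrable_mul (hS k l) (hT _ _)
  simp only [Emat, contract, of_apply]
  rw [integral_finsetSum _ fun k _ => integrable_finsetSum _ fun l _ => hint k l]
  refine sum_congr rfl fun k _ => ?_
  rw [integral_finsetSum _ fun l _ => hint k l]
  exact sum_congr rfl fun l _ =>
    (hind k l).integral_fun_mul_eq_mul_integral (hS k l).1 (hT _ _).1

theorem lemma3_independence_bound_general
    {M : ℕ} {Ω' : Type} [MeasurableSpace Ω'] (Pr : Measure Ω')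
    (P Q : Ω' → Matrix (Fin M) (Fin M) ℝ) (v w : Ω' → Fin M → ℝ)
    (hindep : IndepFun (fun ω => (v ω, w ω)) (fun ω => (P ω, Q ω)) Pr)
    (hint2 : IntM Pr (fun ω => vecMulVec (v ω) (w ω)))
    (hint3 : IntM Pr (fun ω => vecOuter (P ω) (Q ω))) :
    frobNorm (Emat Pr (fun ω => P ω * vecMulVec (v ω) (w ω) * Q ω)) ≤
      frobNorm (Emat Pr (fun ω => vecMulVec (v ω) (w ω))) *
        frobNorm (Emat Pr (fun ω => vecOuter (P ω) (Q ω))) := by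
  have h := Emat_contract_of_indepFun (hindep.comp measurable_vecMulVec measurable_vecOuter)
    hint2 hint3
  simp only [Function.comp_def, contract_vecOuter] at h
  rw [h]
  exact frobNorm_contract_le _ _

/-- Lemma 3: if the pair `(v, w)` is independent of the pair `(P, Q)` and the
relevant products are integrable, then
`‖E[P v wᵀ Q]‖_F ≤ ‖E[v wᵀ]‖_F ‖E[vec(P) vec(Q)ᵀ]‖_F`. -/
theorem lemma3_independence_bound
    {M : ℕ} {Ω' : Type} [MeasurableSpace Ω'] (Pr : Measure Ω') [IsProbabilityMeasure Pr]
    (P Q : Ω' → Matrix (Fin M) (Fin M) ℝ) (v w : Ω' → Fin M → ℝ)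
    (hindep : IndepFun (fun ω => (v ω, w ω)) (fun ω => (P ω, Q ω)) Pr)
    (hint1 : IntM Pr (fun ω => P ω * vecMulVec (v ω) (w ω) * Q ω))
    (hint2 : IntM Pr (fun ω => vecMulVec (v ω) (w ω)))
    (hint3 : IntM Pr (fun ω => vecOuter (P ω) (Q ω))) :
    frobNorm (Emat Pr (fun ω => P ω * vecMulVec (v ω) (w ω) * Q ω)) ≤
      frobNorm (Emat Pr (fun ω => vecMulVec (v ω) (w ω))) *
        frobNorm (Emat Pr (fun ω => vecOuter (P ω) (Q ω))) :=
  lemma3_independence_bound_general Pr P Q v w hindep hint2 hint3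
end

section
/- (Lemma 4.) Fix γ ≥ 0 with B + γC invertible and suppose λ > 0 is such that ‖I − μ_j Ψ A‖₂ ≤ 1 − μ_j λ and 0 < μ_j λ ≤ 1 for every j ≥ 1. Then for every k ≥ 1, ‖E[e^k (e^k)ᵀ]‖_F ≤ ((1 − μ_k λ)² + μ_k² σ_ΩΩ² d²) ‖E[e^{k−1} (e^{k−1})ᵀ]‖_F + μ_k² d² (σ_θθ² + 2 σ_Ωθ² ‖û‖ + σ_ΩΩ² ‖û‖²) + 2 μ_k² d² (σ_ΩΩ² ‖û‖ + σ_Ωθ²) ‖E[e^0]‖. -/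
open MeasureTheory ProbabilityTheory Matrix Filter

/-!
Write `Ψ = (B + γC)⁻¹`, `T = I − μ_k Ψ A` and `x = e^{k−1}`. The recursion reads
`e^k = T x + μ_k Ψ ξ` with noise `ξ = θ^k − Ω_k (x + û)`. As `(θ^k, Ω_k)` is centred and
independent of `x`, `E[x ξᵀ] = 0`, hence `E[e^k e^kᵀ] = T E[x xᵀ] Tᵀ + μ_k² Ψ E[ξ ξᵀ] Ψᵀ`.
Independence also splits `E[ξ ξᵀ]` into the covariances of `θ^k` and `Ω_k` contracted against the
first two moments of `x + û`, and Cauchy–Schwarz bounds each contraction by the corresponding `σ²`.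
Finally `‖T‖₂ ≤ 1 − μ_k λ ≤ 1`, and `E e^j = T_j E e^{j−1}` makes `‖E e^j‖` non-increasing.
-/

open scoped Matrix.Norms.Frobenius

section Norms

variable {ι κ : Type*} [Fintype ι] [Fintype κ]

lemma euclNorm_eq_norm_s13 (v : ι → ℝ) : euclNorm v = ‖WithLp.toLp 2 v‖ := by
  simp [euclNorm, EuclideanSpace.norm_eq]

lemma frobNorm_eq_norm (F : Matrix ι κ ℝ) : frobNorm F = ‖F‖ := by
  rw [frobNorm, frobenius_norm_def, Real.sqrt_eq_rpow]
  simp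

lemma euclNorm_nonneg (v : ι → ℝ) : 0 ≤ euclNorm v := Real.sqrt_nonneg _

lemma frobNorm_nonneg (F : Matrix ι κ ℝ) : 0 ≤ frobNorm F := Real.sqrt_nonneg _

lemma frobNorm_sq (F : Matrix ι κ ℝ) : frobNorm F ^ 2 = ∑ i, ∑ j, F i j ^ 2 :=
  Real.sq_sqrt (by positivity)

lemma euclNorm_sq (v : ι → ℝ) : euclNorm v ^ 2 = ∑ i, v i ^ 2 :=
  Real.sq_sqrt (by positivity)

lemma euclNorm_add_le (v w : ι → ℝ) : euclNorm (v + w) ≤ euclNorm v + euclNorm w := by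
  simpa only [euclNorm_eq_norm_s13, WithLp.toLp_add] using norm_add_le _ _

lemma frobNorm_le_mul_of_sq_le {F : Matrix ι κ ℝ} {a b : ℝ} (ha : 0 ≤ a) (hb : 0 ≤ b)
    (h : ∑ i, ∑ j, F i j ^ 2 ≤ a ^ 2 * b ^ 2) : frobNorm F ≤ a * b := by
  rw [← frobNorm_sq, ← mul_pow] at h
  exact (pow_le_pow_iff_left₀ (frobNorm_nonneg _) (mul_nonneg ha hb) two_ne_zero).1 h

lemma frobNorm_vecMulVec (u : ι → ℝ) (v : κ → ℝ) :
    frobNorm (vecMulVec u v) = euclNorm u * euclNorm v := by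
  rw [frobNorm, euclNorm, euclNorm, ← Real.sqrt_mul (by positivity), Finset.sum_mul_sum]
  simp [vecMulVec_apply, mul_pow]

lemma frobNorm_mul_mul_transpose_le (S : Matrix ι κ ℝ) (X : Matrix κ κ ℝ) :
    frobNorm (S * X * Sᵀ) ≤ frobNorm S ^ 2 * frobNorm X := by
  simp only [frobNorm_eq_norm]
  calc ‖S * X * Sᵀ‖ ≤ ‖S‖ * ‖X‖ * ‖Sᵀ‖ :=
        (frobenius_norm_mul _ _).trans (by gcongr; exact frobenius_norm_mul _ _)
    _ = ‖S‖ ^ 2 * ‖X‖ := by rw [frobenius_norm_transpose]; ring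

variable {n : ℕ}

lemma euclNorm_mulVec_le (T : Matrix (Fin n) (Fin n) ℝ) (x : Fin n → ℝ) :
    euclNorm (T *ᵥ x) ≤ l2OpNorm T * euclNorm x := by
  simp only [euclNorm_eq_norm_s13, l2OpNorm, ← toEuclideanCLM_toLp]
  exact ContinuousLinearMap.le_opNorm _ _

lemma frobNorm_mul_le_l2OpNorm_mul (T : Matrix (Fin n) (Fin n) ℝ) (X : Matrix (Fin n) κ ℝ) :
    frobNorm (T * X) ≤ l2OpNorm T * frobNorm X := by
  have hcol : ∀ j, ∑ i, (T * X) i j ^ 2 ≤ l2OpNorm T ^ 2 * ∑ i, X i j ^ 2 := fun j => by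
    have hTX : (fun i => (T * X) i j) = T *ᵥ fun i => X i j := by
      ext i; simp [mul_apply, mulVec, dotProduct]
    rw [← euclNorm_sq, ← euclNorm_sq, ← mul_pow, hTX]
    exact pow_le_pow_left₀ (euclNorm_nonneg _) (euclNorm_mulVec_le _ _) 2
  refine frobNorm_le_mul_of_sq_le (norm_nonneg _) (frobNorm_nonneg _) ?_
  rw [frobNorm_sq, Finset.sum_comm, Finset.sum_comm (f := fun i j => X i j ^ 2), Finset.mul_sum]
  exact Finset.sum_le_sum fun j _ => hcol j

lemma frobNorm_mul_mul_transpose_le_l2OpNorm (T X : Matrix (Fin n) (Fin n) ℝ) :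
    frobNorm (T * X * Tᵀ) ≤ l2OpNorm T ^ 2 * frobNorm X := by
  have hXT : frobNorm (X * Tᵀ) = frobNorm (T * Xᵀ) := by
    rw [frobNorm_eq_norm, frobNorm_eq_norm, ← frobenius_norm_transpose, transpose_mul,
      transpose_transpose]
  calc frobNorm (T * X * Tᵀ) ≤ l2OpNorm T * frobNorm (T * Xᵀ) := by
        rw [Matrix.mul_assoc, ← hXT]; exact frobNorm_mul_le_l2OpNorm_mul _ _
    _ ≤ l2OpNorm T * (l2OpNorm T * frobNorm Xᵀ) := by
        gcongr; exacts [norm_nonneg _, frobNorm_mul_le_l2OpNorm_mul _ _]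
    _ = l2OpNorm T ^ 2 * frobNorm X := by
        rw [frobNorm_eq_norm Xᵀ, frobenius_norm_transpose, ← frobNorm_eq_norm]; ring

lemma frobNorm_mul_mul_transpose_add_le (T X S N : Matrix (Fin n) (Fin n) ℝ) :
    frobNorm (T * X * Tᵀ + S * N * Sᵀ) ≤
      l2OpNorm T ^ 2 * frobNorm X + frobNorm S ^ 2 * frobNorm N :=
  calc _ ≤ frobNorm (T * X * Tᵀ) + frobNorm (S * N * Sᵀ) := by
        simp only [frobNorm_eq_norm]; exact norm_add_le _ _
    _ ≤ _ := add_le_add (frobNorm_mul_mul_transpose_le_l2OpNorm _ _)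
        (frobNorm_mul_mul_transpose_le _ _)

end Norms

section Contractions

variable {ι : Type*} [Fintype ι]

/- If `K = E[vec W vec Wᵀ]` and `J = E[vec W θᵀ]` for a random matrix `W` and vector `θ`, then
`pairContract K V = E[W V Wᵀ]` and `vecContract J v = E[W v θᵀ]` for deterministic `V` and `v`. -/
def pairContract (K : Matrix (ι × ι) (ι × ι) ℝ) (V : Matrix ι ι ℝ) : Matrix ι ι ℝ :=
  of fun i j => ∑ p : ι × ι, K (i, p.1) (j, p.2) * V p.1 p.2

def vecContract (J : Matrix (ι × ι) ι ℝ) (v : ι → ℝ) : Matrix ι ι ℝ :=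
  of fun i j => ∑ l, J (i, l) j * v l

lemma frobNorm_pairContract_le (K : Matrix (ι × ι) (ι × ι) ℝ) (V : Matrix ι ι ℝ) :
    frobNorm (pairContract K V) ≤ frobNorm K * frobNorm V := by
  refine frobNorm_le_mul_of_sq_le (frobNorm_nonneg _) (frobNorm_nonneg _) ?_
  rw [frobNorm_sq, frobNorm_sq, ← Fintype.sum_prod_type' (fun l m => V l m ^ 2)]
  calc ∑ i, ∑ j, pairContract K V i j ^ 2
      ≤ ∑ i, ∑ j, (∑ p : ι × ι, K (i, p.1) (j, p.2) ^ 2) * ∑ p : ι × ι, V p.1 p.2 ^ 2 := by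
        gcongr with i _ j _
        exact Finset.sum_mul_sq_le_sq_mul_sq _ _ _
    _ = (∑ q, ∑ q', K q q' ^ 2) * ∑ p : ι × ι, V p.1 p.2 ^ 2 := by
        simp only [← Finset.sum_mul, Fintype.sum_prod_type]
        exact congrArg (· * _) (Finset.sum_congr rfl fun _ _ => Finset.sum_comm)

lemma frobNorm_vecContract_le (J : Matrix (ι × ι) ι ℝ) (v : ι → ℝ) :
    frobNorm (vecContract J v) ≤ frobNorm J * euclNorm v := by
  refine frobNorm_le_mul_of_sq_le (frobNorm_nonneg _) (euclNorm_nonneg _) ?_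
  rw [frobNorm_sq, euclNorm_sq]
  calc ∑ i, ∑ j, vecContract J v i j ^ 2
      ≤ ∑ i, ∑ j, (∑ l, J (i, l) j ^ 2) * ∑ l, v l ^ 2 := by
        gcongr with i _ j _
        exact Finset.sum_mul_sq_le_sq_mul_sq _ _ _
    _ = (∑ q, ∑ j, J q j ^ 2) * ∑ l, v l ^ 2 := by
        simp only [← Finset.sum_mul, Fintype.sum_prod_type]
        exact congrArg (· * _) (Finset.sum_congr rfl fun _ _ => Finset.sum_comm)

/- `E[ξ ξᵀ]` for `ξ = θ - W (x + u)`, with `Θ = E[θ θᵀ]`, `J = E[vec W θᵀ]`, `K = E[vec W vec Wᵀ]`,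
`X = E[x xᵀ]` and `m = E x`, when `(θ, W)` is independent of `x`. -/
def noiseCov (Θ : Matrix ι ι ℝ) (J : Matrix (ι × ι) ι ℝ) (K : Matrix (ι × ι) (ι × ι) ℝ)
    (X : Matrix ι ι ℝ) (m u : ι → ℝ) : Matrix ι ι ℝ :=
  Θ - (vecContract J (m + u))ᵀ - vecContract J (m + u)
    + pairContract K (X + vecMulVec m u + vecMulVec u m + vecMulVec u u)

lemma frobNorm_noiseCov_le (Θ : Matrix ι ι ℝ) (J : Matrix (ι × ι) ι ℝ)
    (K : Matrix (ι × ι) (ι × ι) ℝ) (X : Matrix ι ι ℝ) (m u : ι → ℝ) :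
    frobNorm (noiseCov Θ J K X m u) ≤ frobNorm Θ + 2 * frobNorm J * (euclNorm m + euclNorm u)
      + frobNorm K * (frobNorm X + 2 * euclNorm m * euclNorm u + euclNorm u ^ 2) := by
  set C := vecContract J (m + u)
  set V := X + vecMulVec m u + vecMulVec u m + vecMulVec u u
  have hC : frobNorm C ≤ frobNorm J * (euclNorm m + euclNorm u) :=
    (frobNorm_vecContract_le _ _).trans (by gcongr; exacts [frobNorm_nonneg _, euclNorm_add_le _ _])
  have hV : frobNorm V ≤ frobNorm X + 2 * euclNorm m * euclNorm u + euclNorm u ^ 2 :=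
    calc frobNorm V ≤ frobNorm X + frobNorm (vecMulVec m u) + frobNorm (vecMulVec u m)
          + frobNorm (vecMulVec u u) := by
          simp only [V, frobNorm_eq_norm]; exact norm_add₄_le
      _ = _ := by simp only [frobNorm_vecMulVec]; ring
  have hK := frobNorm_pairContract_le K V
  have hR : frobNorm (noiseCov Θ J K X m u) ≤ frobNorm Θ + 2 * frobNorm C
      + frobNorm (pairContract K V) := by
    simp only [noiseCov, frobNorm_eq_norm]
    have := norm_sub_le (Θ - Cᵀ) C
    have := norm_sub_le Θ Cᵀ
    have := norm_add_le (Θ - Cᵀ - C) (pairContract K V)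
    rw [frobenius_norm_transpose] at *
    linarith
  nlinarith [frobNorm_nonneg K]

end Contractions

section Expectation

variable {Ω ι κ : Type*} [MeasurableSpace Ω] {P : Measure Ω}

lemma IntV.add {x y : Ω → ι → ℝ} (hx : IntV P x) (hy : IntV P y) :
    IntV P fun ω => x ω + y ω := fun i => (hx i).add (hy i)

lemma IntV.sub {x y : Ω → ι → ℝ} (hx : IntV P x) (hy : IntV P y) :
    IntV P fun ω => x ω - y ω := fun i => (hx i).sub (hy i)

lemma IntV.mulVec [Fintype ι] {x : Ω → ι → ℝ} (hx : IntV P x) (T : Matrix κ ι ℝ) :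
    IntV P fun ω => T *ᵥ x ω := fun _ =>
  integrable_finsetSum _ fun l _ => (hx l).const_mul _

lemma Evec_add {x y : Ω → ι → ℝ} (hx : IntV P x) (hy : IntV P y) :
    Evec P (fun ω => x ω + y ω) = Evec P x + Evec P y :=
  funext fun i => integral_add (hx i) (hy i)

lemma Evec_sub {x y : Ω → ι → ℝ} (hx : IntV P x) (hy : IntV P y) :
    Evec P (fun ω => x ω - y ω) = Evec P x - Evec P y :=
  funext fun i => integral_sub (hx i) (hy i)

lemma Evec_mulVec [Fintype ι] {x : Ω → ι → ℝ} (hx : IntV P x) (T : Matrix κ ι ℝ) :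
    Evec P (fun ω => T *ᵥ x ω) = T *ᵥ Evec P x := by
  ext i
  simp only [Evec, mulVec, dotProduct]
  rw [integral_finsetSum _ fun l _ => (hx l).const_mul _]
  simp only [integral_const_mul]

variable {F G : Ω → Matrix ι κ ℝ}

lemma IntM.add (hF : IntM P F) (hG : IntM P G) : IntM P fun ω => F ω + G ω :=
  fun i j => (hF i j).add (hG i j)

lemma IntM.sub (hF : IntM P F) (hG : IntM P G) : IntM P fun ω => F ω - G ω :=
  fun i j => (hF i j).sub (hG i j)

lemma IntM.transpose (hF : IntM P F) : IntM P fun ω => (F ω)ᵀ :=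
  fun i j => hF j i

lemma IntM.mul_mul [Fintype ι] [Fintype κ] (hF : IntM P F) {ι' κ' : Type*} (A : Matrix ι' ι ℝ)
    (B : Matrix κ κ' ℝ) : IntM P fun ω => A * F ω * B := fun _ _ =>
  integrable_finsetSum _ fun _ _ =>
    (integrable_finsetSum _ fun _ _ => (hF _ _).const_mul _).mul_const _

lemma Emat_add (hF : IntM P F) (hG : IntM P G) :
    Emat P (fun ω => F ω + G ω) = Emat P F + Emat P G := by
  ext i j
  exact integral_add (hF i j) (hG i j)

lemma Emat_sub (hF : IntM P F) (hG : IntM P G) :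
    Emat P (fun ω => F ω - G ω) = Emat P F - Emat P G := by
  ext i j
  exact integral_sub (hF i j) (hG i j)

lemma Emat_transpose : Emat P (fun ω => (F ω)ᵀ) = (Emat P F)ᵀ := rfl

lemma Emat_mul_mul [Fintype ι] [Fintype κ] (hF : IntM P F) {ι' κ' : Type*} (A : Matrix ι' ι ℝ)
    (B : Matrix κ κ' ℝ) : Emat P (fun ω => A * F ω * B) = A * Emat P F * B := by
  ext i j
  simp only [Emat, of_apply, mul_apply]
  rw [integral_finsetSum _ fun _ _ =>
    (integrable_finsetSum _ fun _ _ => (hF _ _).const_mul _).mul_const _]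
  refine Finset.sum_congr rfl fun l _ => ?_
  rw [integral_mul_const, integral_finsetSum _ fun _ _ => (hF _ _).const_mul _]
  simp only [integral_const_mul]

end Expectation

section SecondMoment

variable {Ω ι κ : Type*} [MeasurableSpace Ω] {P : Measure Ω}

lemma vecMulVec_mulVec_mulVec {ι' κ' : Type*} [Fintype ι] [Fintype ι'] (A : Matrix κ ι ℝ)
    (B : Matrix κ' ι' ℝ) (x : ι → ℝ) (y : ι' → ℝ) :
    vecMulVec (A *ᵥ x) (B *ᵥ y) = A * vecMulVec x y * Bᵀ := by
  rw [mul_vecMulVec, vecMulVec_mul, vecMul_transpose]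

lemma Emat_vecMulVec_add_const [IsProbabilityMeasure P] {x : Ω → ι → ℝ} (hx : IntV P x)
    (hxx : IntM P fun ω => vecMulVec (x ω) (x ω)) (u : ι → ℝ) :
    (IntM P fun ω => vecMulVec (x ω + u) (x ω + u)) ∧
      Emat P (fun ω => vecMulVec (x ω + u) (x ω + u)) =
        Emat P (fun ω => vecMulVec (x ω) (x ω)) + vecMulVec (Evec P x) u
          + vecMulVec u (Evec P x) + vecMulVec u u := by
  have hxu : IntM P fun ω => vecMulVec (x ω) u := fun i _ => (hx i).mul_const _
  have hux : IntM P fun ω => vecMulVec u (x ω) := fun _ j => (hx j).const_mul _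
  have huu : IntM P fun _ : Ω => vecMulVec u u := fun _ _ => integrable_const _
  have hexp : ∀ ω, vecMulVec (x ω + u) (x ω + u) =
      vecMulVec (x ω) (x ω) + vecMulVec (x ω) u + vecMulVec u (x ω) + vecMulVec u u := by
    intro ω; rw [add_vecMulVec, vecMulVec_add, vecMulVec_add]; abel
  simp only [hexp]
  refine ⟨((hxx.add hxu).add hux).add huu, ?_⟩
  rw [Emat_add ((hxx.add hxu).add hux) huu, Emat_add (hxx.add hxu) hux, Emat_add hxx hxu]
  congr 2 <;> ext i j <;> simp [Emat, Evec, vecMulVec_apply, integral_mul_const, integral_const_mul]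

lemma Emat_vecMulVec_add_of_uncorrelated [Fintype ι] {x ξ : Ω → ι → ℝ} (T S : Matrix κ ι ℝ)
    (hxx : IntM P fun ω => vecMulVec (x ω) (x ω)) (hξξ : IntM P fun ω => vecMulVec (ξ ω) (ξ ω))
    (hxξ : IntM P fun ω => vecMulVec (x ω) (ξ ω))
    (h0 : Emat P (fun ω => vecMulVec (x ω) (ξ ω)) = 0) :
    Emat P (fun ω => vecMulVec (T *ᵥ x ω + S *ᵥ ξ ω) (T *ᵥ x ω + S *ᵥ ξ ω)) =
      T * Emat P (fun ω => vecMulVec (x ω) (x ω)) * Tᵀ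
        + S * Emat P (fun ω => vecMulVec (ξ ω) (ξ ω)) * Sᵀ := by
  have hexp : ∀ ω, vecMulVec (T *ᵥ x ω + S *ᵥ ξ ω) (T *ᵥ x ω + S *ᵥ ξ ω) =
      T * vecMulVec (x ω) (x ω) * Tᵀ + T * vecMulVec (x ω) (ξ ω) * Sᵀ
        + S * (vecMulVec (x ω) (ξ ω))ᵀ * Tᵀ + S * vecMulVec (ξ ω) (ξ ω) * Sᵀ := by
    intro ω
    simp only [add_vecMulVec, vecMulVec_add, vecMulVec_mulVec_mulVec, transpose_vecMulVec]
    abel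
  have h1 := hxx.mul_mul T Tᵀ
  have h2 := hxξ.mul_mul T Sᵀ
  have h3 := hxξ.transpose.mul_mul S Tᵀ
  simp only [hexp]
  rw [Emat_add ((h1.add h2).add h3) (hξξ.mul_mul S Sᵀ), Emat_add (h1.add h2) h3, Emat_add h1 h2,
    Emat_mul_mul hxx, Emat_mul_mul hxξ, Emat_mul_mul hxξ.transpose, Emat_mul_mul hξξ,
    Emat_transpose, h0]
  simp

end SecondMoment

namespace ProbabilityTheory.IndepFun

variable {Ω α β τ : Type*} [MeasurableSpace Ω] {P : Measure Ω} [MeasurableSpace α]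
  [MeasurableSpace β] [Fintype τ] {U : Ω → α} {V : Ω → β} {φ : τ → α → ℝ} {ψ : τ → β → ℝ}

lemma integrable_comp_mul_comp (h : IndepFun U V P) {f : α → ℝ} {g : β → ℝ}
    (hf : Measurable f) (hg : Measurable g) (hfi : Integrable (fun ω => f (U ω)) P)
    (hgi : Integrable (fun ω => g (V ω)) P) : Integrable (fun ω => f (U ω) * g (V ω)) P :=
  (h.comp hf hg).integrable_mul hfi hgi

lemma integrable_sum_comp_mul_comp (h : IndepFun U V P) (hφ : ∀ t, Measurable (φ t))
    (hψ : ∀ t, Measurable (ψ t)) (hφi : ∀ t, Integrable (fun ω => φ t (U ω)) P)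
    (hψi : ∀ t, Integrable (fun ω => ψ t (V ω)) P) :
    Integrable (fun ω => ∑ t, φ t (U ω) * ψ t (V ω)) P :=
  integrable_finsetSum _ fun t _ => h.integrable_comp_mul_comp (hφ t) (hψ t) (hφi t) (hψi t)

lemma integral_sum_comp_mul_comp (h : IndepFun U V P) (hφ : ∀ t, Measurable (φ t))
    (hψ : ∀ t, Measurable (ψ t)) (hφi : ∀ t, Integrable (fun ω => φ t (U ω)) P)
    (hψi : ∀ t, Integrable (fun ω => ψ t (V ω)) P) :
    ∫ ω, ∑ t, φ t (U ω) * ψ t (V ω) ∂P = ∑ t, (∫ ω, φ t (U ω) ∂P) * ∫ ω, ψ t (V ω) ∂P := by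
  rw [integral_finsetSum _ fun t _ =>
    h.integrable_comp_mul_comp (hφ t) (hψ t) (hφi t) (hψi t)]
  exact Finset.sum_congr rfl fun t _ => (h.comp (hφ t) (hψ t)).integral_fun_mul_eq_mul_integral
    (hφi t).aestronglyMeasurable (hψi t).aestronglyMeasurable

end ProbabilityTheory.IndepFun

section Independence

variable {Ω : Type*} [MeasurableSpace Ω] {P : Measure Ω} {n : ℕ}
  {θ v x : Ω → Fin n → ℝ} {W : Ω → Matrix (Fin n) (Fin n) ℝ}

lemma Evec_mulVec_of_indepFun (h : IndepFun W v P) (hW : IntM P W) (hv : IntV P v) :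
    IntV P (fun ω => W ω *ᵥ v ω) ∧ Evec P (fun ω => W ω *ᵥ v ω) = Emat P W *ᵥ Evec P v := by
  refine ⟨fun i => ?_, funext fun i => ?_⟩
  · exact h.integrable_sum_comp_mul_comp (φ := fun l (A : Matrix (Fin n) (Fin n) ℝ) => A i l)
      (ψ := fun l (z : Fin n → ℝ) => z l) (fun _ => by fun_prop) (fun _ => by fun_prop) (hW i) hv
  · exact h.integral_sum_comp_mul_comp (φ := fun l (A : Matrix (Fin n) (Fin n) ℝ) => A i l)
      (ψ := fun l (z : Fin n → ℝ) => z l) (fun _ => by fun_prop) (fun _ => by fun_prop) (hW i) hv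

lemma Emat_vecMulVec_of_indepFun (h : IndepFun x θ P) (hx : IntV P x) (hθ : IntV P θ) :
    (IntM P fun ω => vecMulVec (x ω) (θ ω)) ∧
      Emat P (fun ω => vecMulVec (x ω) (θ ω)) = vecMulVec (Evec P x) (Evec P θ) := by
  refine ⟨fun a b => ?_, ?_⟩
  · exact h.integrable_comp_mul_comp (f := fun z => z a) (g := fun z => z b)
      (by fun_prop) (by fun_prop) (hx a) (hθ b)
  · ext a b
    exact (h.comp (measurable_pi_apply a) (measurable_pi_apply b)).integral_fun_mul_eq_mul_integral
      (hx a).aestronglyMeasurable (hθ b).aestronglyMeasurable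

lemma Emat_vecMulVec_mulVec_eq_mul_transpose (h : IndepFun W (fun ω => (x ω, v ω)) P)
    (hW : IntM P W) (hxv : IntM P fun ω => vecMulVec (x ω) (v ω)) :
    (IntM P fun ω => vecMulVec (x ω) (W ω *ᵥ v ω)) ∧
      Emat P (fun ω => vecMulVec (x ω) (W ω *ᵥ v ω)) =
        Emat P (fun ω => vecMulVec (x ω) (v ω)) * (Emat P W)ᵀ := by
  have hentry : ∀ a b ω, vecMulVec (x ω) (W ω *ᵥ v ω) a b =
      ∑ m, W ω b m * (x ω a * v ω m) := fun a b ω => by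
    simp only [vecMulVec_apply, mulVec, dotProduct, Finset.mul_sum]
    exact Finset.sum_congr rfl fun _ _ => by ring
  refine ⟨fun a b => ?_, ?_⟩
  · simp only [hentry]
    exact h.integrable_sum_comp_mul_comp (φ := fun m (A : Matrix (Fin n) (Fin n) ℝ) => A b m)
      (ψ := fun m (z : (Fin n → ℝ) × (Fin n → ℝ)) => z.1 a * z.2 m)
      (fun _ => by fun_prop) (fun _ => by fun_prop) (hW b) (hxv a)
  · ext a b
    simp only [Emat, of_apply, hentry, mul_apply, transpose_apply]
    rw [h.integral_sum_comp_mul_comp (φ := fun m (A : Matrix (Fin n) (Fin n) ℝ) => A b m)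
      (ψ := fun m (z : (Fin n → ℝ) × (Fin n → ℝ)) => z.1 a * z.2 m)
      (fun _ => by fun_prop) (fun _ => by fun_prop) (hW b) (hxv a)]
    exact Finset.sum_congr rfl fun _ _ => mul_comm _ _

lemma Emat_vecMulVec_mulVec_eq_vecContract (h : IndepFun (fun ω => (θ ω, W ω)) v P)
    (hWθ : IntM P fun ω => vecOuterVec (W ω) (θ ω)) (hv : IntV P v) :
    (IntM P fun ω => vecMulVec (W ω *ᵥ v ω) (θ ω)) ∧
      Emat P (fun ω => vecMulVec (W ω *ᵥ v ω) (θ ω)) =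
        vecContract (Emat P fun ω => vecOuterVec (W ω) (θ ω)) (Evec P v) := by
  have hentry : ∀ i j ω, vecMulVec (W ω *ᵥ v ω) (θ ω) i j =
      ∑ l, (W ω i l * θ ω j) * v ω l := fun i j ω => by
    simp only [vecMulVec_apply, mulVec, dotProduct, Finset.sum_mul]
    exact Finset.sum_congr rfl fun _ _ => by ring
  refine ⟨fun i j => ?_, ?_⟩
  · simp only [hentry]
    exact h.integrable_sum_comp_mul_comp
      (φ := fun l (z : (Fin n → ℝ) × Matrix (Fin n) (Fin n) ℝ) => z.2 i l * z.1 j)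
      (ψ := fun l (z : Fin n → ℝ) => z l) (fun _ => by fun_prop) (fun _ => by fun_prop)
      (fun l => hWθ (i, l) j) hv
  · ext i j
    simp only [Emat, of_apply, hentry]
    exact h.integral_sum_comp_mul_comp
      (φ := fun l (z : (Fin n → ℝ) × Matrix (Fin n) (Fin n) ℝ) => z.2 i l * z.1 j)
      (ψ := fun l (z : Fin n → ℝ) => z l) (fun _ => by fun_prop) (fun _ => by fun_prop)
      (fun l => hWθ (i, l) j) hv

lemma Emat_vecMulVec_mulVec_eq_pairContract (h : IndepFun W v P)
    (hWW : IntM P fun ω => vecOuter (W ω) (W ω)) (hvv : IntM P fun ω => vecMulVec (v ω) (v ω)) :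
    (IntM P fun ω => vecMulVec (W ω *ᵥ v ω) (W ω *ᵥ v ω)) ∧
      Emat P (fun ω => vecMulVec (W ω *ᵥ v ω) (W ω *ᵥ v ω)) =
        pairContract (Emat P fun ω => vecOuter (W ω) (W ω))
          (Emat P fun ω => vecMulVec (v ω) (v ω)) := by
  have hentry : ∀ i j ω, vecMulVec (W ω *ᵥ v ω) (W ω *ᵥ v ω) i j =
      ∑ p : Fin n × Fin n, (W ω i p.1 * W ω j p.2) * (v ω p.1 * v ω p.2) := fun i j ω => by
    simp only [vecMulVec_apply, mulVec, dotProduct, Finset.sum_mul_sum, Fintype.sum_prod_type]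
    exact Finset.sum_congr rfl fun _ _ => Finset.sum_congr rfl fun _ _ => by ring
  refine ⟨fun i j => ?_, ?_⟩
  · simp only [hentry]
    exact h.integrable_sum_comp_mul_comp
      (φ := fun (p : Fin n × Fin n) (A : Matrix (Fin n) (Fin n) ℝ) => A i p.1 * A j p.2)
      (ψ := fun (p : Fin n × Fin n) (z : Fin n → ℝ) => z p.1 * z p.2)
      (fun _ => by fun_prop) (fun _ => by fun_prop)
      (fun p => hWW (i, p.1) (j, p.2)) (fun p => hvv p.1 p.2)
  · ext i j
    simp only [Emat, of_apply, hentry]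
    exact h.integral_sum_comp_mul_comp
      (φ := fun (p : Fin n × Fin n) (A : Matrix (Fin n) (Fin n) ℝ) => A i p.1 * A j p.2)
      (ψ := fun (p : Fin n × Fin n) (z : Fin n → ℝ) => z p.1 * z p.2)
      (fun _ => by fun_prop) (fun _ => by fun_prop)
      (fun p => hWW (i, p.1) (j, p.2)) (fun p => hvv p.1 p.2)

lemma Emat_vecMulVec_sub_mulVec_self (h : IndepFun (fun ω => (θ ω, W ω)) v P)
    (hθθ : IntM P fun ω => vecMulVec (θ ω) (θ ω)) (hWW : IntM P fun ω => vecOuter (W ω) (W ω))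
    (hWθ : IntM P fun ω => vecOuterVec (W ω) (θ ω)) (hv : IntV P v)
    (hvv : IntM P fun ω => vecMulVec (v ω) (v ω)) :
    (IntM P fun ω => vecMulVec (θ ω - W ω *ᵥ v ω) (θ ω - W ω *ᵥ v ω)) ∧
      Emat P (fun ω => vecMulVec (θ ω - W ω *ᵥ v ω) (θ ω - W ω *ᵥ v ω)) =
        Emat P (fun ω => vecMulVec (θ ω) (θ ω))
          - (vecContract (Emat P fun ω => vecOuterVec (W ω) (θ ω)) (Evec P v))ᵀ
          - vecContract (Emat P fun ω => vecOuterVec (W ω) (θ ω)) (Evec P v)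
          + pairContract (Emat P fun ω => vecOuter (W ω) (W ω))
              (Emat P fun ω => vecMulVec (v ω) (v ω)) := by
  obtain ⟨hWvθ, hEWvθ⟩ := Emat_vecMulVec_mulVec_eq_vecContract h hWθ hv
  obtain ⟨hWvWv, hEWvWv⟩ := Emat_vecMulVec_mulVec_eq_pairContract (W := W) (v := v)
    (h.comp measurable_snd measurable_id) hWW hvv
  have hexp : ∀ ω, vecMulVec (θ ω - W ω *ᵥ v ω) (θ ω - W ω *ᵥ v ω) =
      vecMulVec (θ ω) (θ ω) - (vecMulVec (W ω *ᵥ v ω) (θ ω))ᵀ - vecMulVec (W ω *ᵥ v ω) (θ ω)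
        + vecMulVec (W ω *ᵥ v ω) (W ω *ᵥ v ω) := fun ω => by
    rw [sub_vecMulVec, vecMulVec_sub, vecMulVec_sub, transpose_vecMulVec]
    abel
  simp only [hexp]
  have hint := (hθθ.sub hWvθ.transpose).sub hWvθ
  refine ⟨hint.add hWvWv, ?_⟩
  rw [Emat_add hint hWvWv, Emat_sub (hθθ.sub hWvθ.transpose) hWvθ, Emat_sub hθθ hWvθ.transpose,
    Emat_transpose, hEWvθ, hEWvWv]

end Independence

section ErrorStep

variable {ι : Type*} [Fintype ι]

def errorStep (T S W : Matrix ι ι ℝ) (θ u x : ι → ℝ) : ι → ℝ :=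
  T *ᵥ x + S *ᵥ (θ - W *ᵥ (x + u))

lemma mulVec_add_smul_mulVec_eq_errorStep [DecidableEq ι] (A Ψ W : Matrix ι ι ℝ) (c : ℝ)
    (θ u x : ι → ℝ) :
    (1 - c • (Ψ * (A + W))) *ᵥ x + c • Ψ *ᵥ (θ - W *ᵥ u) =
      errorStep (1 - c • (Ψ * A)) (c • Ψ) W θ u x := by
  simp only [errorStep, sub_mulVec, Matrix.mul_add, smul_add, add_mulVec, smul_mulVec,
    ← mulVec_mulVec, mulVec_add, mulVec_sub, one_mulVec]
  module

variable {Ω : Type*} [MeasurableSpace Ω] {P : Measure Ω} [IsProbabilityMeasure P] {n : ℕ}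
  {θ x : Ω → Fin n → ℝ} {W : Ω → Matrix (Fin n) (Fin n) ℝ}

lemma Evec_errorStep (T S : Matrix (Fin n) (Fin n) ℝ) (u : Fin n → ℝ)
    (h : IndepFun (fun ω => (θ ω, W ω)) x P) (hθ0 : Evec P θ = 0) (hW0 : Emat P W = 0)
    (hθ : IntV P θ) (hW : IntM P W) (hx : IntV P x) :
    Evec P (fun ω => errorStep T S (W ω) (θ ω) u (x ω)) = T *ᵥ Evec P x := by
  have hv : IntV P fun ω => x ω + u := hx.add fun _ => integrable_const _
  obtain ⟨hWv, hEWv⟩ := Evec_mulVec_of_indepFun (W := W) (v := fun ω => x ω + u)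
    (h.comp measurable_snd (by fun_prop : Measurable fun z => z + u)) hW hv
  simp only [errorStep]
  rw [Evec_add (hx.mulVec T) ((hθ.sub hWv).mulVec S), Evec_mulVec hx, Evec_mulVec (hθ.sub hWv),
    Evec_sub hθ hWv, hEWv, hθ0, hW0]
  simp

lemma Emat_vecMulVec_errorStep (T S : Matrix (Fin n) (Fin n) ℝ) (u : Fin n → ℝ)
    (h : IndepFun (fun ω => (θ ω, W ω)) x P) (hθ0 : Evec P θ = 0) (hW0 : Emat P W = 0)
    (hθ : IntV P θ) (hW : IntM P W) (hx : IntV P x)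
    (hxx : IntM P fun ω => vecMulVec (x ω) (x ω)) (hθθ : IntM P fun ω => vecMulVec (θ ω) (θ ω))
    (hWW : IntM P fun ω => vecOuter (W ω) (W ω)) (hWθ : IntM P fun ω => vecOuterVec (W ω) (θ ω)) :
    Emat P (fun ω => vecMulVec (errorStep T S (W ω) (θ ω) u (x ω))
        (errorStep T S (W ω) (θ ω) u (x ω))) =
      T * Emat P (fun ω => vecMulVec (x ω) (x ω)) * Tᵀ
        + S * noiseCov (Emat P fun ω => vecMulVec (θ ω) (θ ω))
          (Emat P fun ω => vecOuterVec (W ω) (θ ω)) (Emat P fun ω => vecOuter (W ω) (W ω))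
          (Emat P fun ω => vecMulVec (x ω) (x ω)) (Evec P x) u * Sᵀ := by
  have hv : IntV P fun ω => x ω + u := hx.add fun _ => integrable_const _
  have hEv : Evec P (fun ω => x ω + u) = Evec P x + u := by
    rw [Evec_add (y := fun _ => u) hx fun _ => integrable_const _]
    ext i
    simp [Evec]
  obtain ⟨hvv, hEvv⟩ := Emat_vecMulVec_add_const hx hxx u
  obtain ⟨hξξ, hEξξ⟩ := Emat_vecMulVec_sub_mulVec_self (v := fun ω => x ω + u)
    (h.comp measurable_id (by fun_prop : Measurable fun z => z + u)) hθθ hWW hWθ hv hvv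
  have hxv : IntM P fun ω => vecMulVec (x ω) (x ω + u) := by
    simp only [vecMulVec_add]
    exact hxx.add fun i _ => (hx i).mul_const _
  obtain ⟨hxθ, hExθ⟩ := Emat_vecMulVec_of_indepFun (x := x) (θ := θ)
    (h.symm.comp measurable_id measurable_fst) hx hθ
  obtain ⟨hxWv, hExWv⟩ := Emat_vecMulVec_mulVec_eq_mul_transpose (W := W) (x := x)
    (v := fun ω => x ω + u)
    (h.comp measurable_snd (by fun_prop : Measurable fun z => (z, z + u))) hW hxv
  have hxξ : IntM P fun ω => vecMulVec (x ω) (θ ω - W ω *ᵥ (x ω + u)) := by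
    simp only [vecMulVec_sub]
    exact hxθ.sub hxWv
  have h0 : Emat P (fun ω => vecMulVec (x ω) (θ ω - W ω *ᵥ (x ω + u))) = 0 := by
    simp only [vecMulVec_sub]
    rw [Emat_sub hxθ hxWv, hExθ, hExWv, hθ0, hW0]
    simp
  simp only [errorStep]
  rw [Emat_vecMulVec_add_of_uncorrelated T S hxx hξξ hxξ h0, hEξξ, hEv, hEvv, noiseCov]

end ErrorStep

theorem lemma4_mean_square_bound_general
    {M : ℕ} {Ω' : Type} [MeasurableSpace Ω'] (P : Measure Ω') [IsProbabilityMeasure P]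
    (A B C : Matrix (Fin M) (Fin M) ℝ)
    (γ : ℝ)
    (uhat : Fin M → ℝ)
    (μ : ℕ → ℝ)
    (lam : ℝ)
    (hcontr : ∀ j, 1 ≤ j →
        l2OpNorm (1 - μ j • ((B + γ • C)⁻¹ * A)) ≤ 1 - μ j * lam)
    (hμlam : ∀ j, 1 ≤ j → 0 < μ j * lam ∧ μ j * lam ≤ 1)
    (θ : ℕ → Ω' → Fin M → ℝ) (W : ℕ → Ω' → Matrix (Fin M) (Fin M) ℝ)
    (e : ℕ → Ω' → Fin M → ℝ)
    (hθint : ∀ k, IntV P (θ k)) (hθmean : ∀ k, 1 ≤ k → Evec P (θ k) = 0)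
    (hWint : ∀ k, IntM P (W k)) (hWmean : ∀ k, 1 ≤ k → Emat P (W k) = 0)
    (hrec : ∀ k, 1 ≤ k → ∀ ω, e k ω =
        (1 - μ k • ((B + γ • C)⁻¹ * (A + W k ω))).mulVec (e (k - 1) ω)
          + μ k • (B + γ • C)⁻¹.mulVec (θ k ω - (W k ω).mulVec uhat))
    (hindep : ∀ k, 1 ≤ k → IndepFun (fun ω => (θ k ω, W k ω)) (fun ω => e (k - 1) ω) P)
    (heint : ∀ k, IntV P (e k))
    (heeint : ∀ k, IntM P (fun ω => vecMulVec (e k ω) (e k ω)))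
    (hintθθ : ∀ k, 1 ≤ k → IntM P (fun ω => vecMulVec (θ k ω) (θ k ω)))
    (hintΩΩ : ∀ k, 1 ≤ k → IntM P (fun ω => vecOuter (W k ω) (W k ω)))
    (hintΩθ : ∀ k, 1 ≤ k → IntM P (fun ω => vecOuterVec (W k ω) (θ k ω)))
    (σθθ2 σΩΩ2 σΩθ2 : ℝ)
    (hσθθ : ∀ k, 1 ≤ k → frobNorm (Emat P (fun ω => vecMulVec (θ k ω) (θ k ω))) = σθθ2)
    (hσΩΩ : ∀ k, 1 ≤ k → frobNorm (Emat P (fun ω => vecOuter (W k ω) (W k ω))) = σΩΩ2)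
    (hσΩθ : ∀ k, 1 ≤ k → frobNorm (Emat P (fun ω => vecOuterVec (W k ω) (θ k ω))) = σΩθ2) :
    ∀ k, 1 ≤ k →
      frobNorm (Emat P (fun ω => vecMulVec (e k ω) (e k ω))) ≤
        ((1 - μ k * lam) ^ 2 + (μ k) ^ 2 * σΩΩ2 * (frobNorm ((B + γ • C)⁻¹)) ^ 2)
            * frobNorm (Emat P (fun ω => vecMulVec (e (k - 1) ω) (e (k - 1) ω)))
        + (μ k) ^ 2 * (frobNorm ((B + γ • C)⁻¹)) ^ 2
            * (σθθ2 + 2 * σΩθ2 * euclNorm uhat + σΩΩ2 * (euclNorm uhat) ^ 2)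
        + 2 * (μ k) ^ 2 * (frobNorm ((B + γ • C)⁻¹)) ^ 2
            * (σΩΩ2 * euclNorm uhat + σΩθ2) * euclNorm (Evec P (e 0)) := by
  set Ψ := (B + γ • C)⁻¹
  have hstep : ∀ j, 1 ≤ j → e j = fun ω =>
      errorStep (1 - μ j • (Ψ * A)) (μ j • Ψ) (W j ω) (θ j ω) uhat (e (j - 1) ω) := fun j hj =>
    funext fun ω => (hrec j hj ω).trans (mulVec_add_smul_mulVec_eq_errorStep _ _ _ _ _ _ _)
  have hmean : Antitone fun j => euclNorm (Evec P (e j)) := antitone_nat_of_succ_le fun j => by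
    rw [hstep (j + 1) (by omega), Evec_errorStep _ _ _ (hindep _ (by omega))
      (hθmean _ (by omega)) (hWmean _ (by omega)) (hθint _) (hWint _) (heint _), Nat.add_sub_cancel]
    refine (euclNorm_mulVec_le _ _).trans (mul_le_of_le_one_left (euclNorm_nonneg _) ?_)
    linarith [hcontr (j + 1) (by omega), (hμlam (j + 1) (by omega)).1]
  intro k hk
  rw [hstep k hk, Emat_vecMulVec_errorStep _ _ _ (hindep k hk) (hθmean k hk) (hWmean k hk)
    (hθint k) (hWint k) (heint _) (heeint _) (hintθθ k hk) (hintΩΩ k hk) (hintΩθ k hk)]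
  refine (frobNorm_mul_mul_transpose_add_le _ _ _ _).trans ?_
  have hS : frobNorm (μ k • Ψ) ^ 2 = μ k ^ 2 * frobNorm Ψ ^ 2 := by
    rw [frobNorm_eq_norm, frobNorm_eq_norm, norm_smul, mul_pow, Real.norm_eq_abs, sq_abs]
  have hσΩΩ0 : 0 ≤ σΩΩ2 := hσΩΩ k hk ▸ frobNorm_nonneg _
  have hσΩθ0 : 0 ≤ σΩθ2 := hσΩθ k hk ▸ frobNorm_nonneg _
  have hu0 := euclNorm_nonneg uhat
  have hm : euclNorm (Evec P (e (k - 1))) ≤ euclNorm (Evec P (e 0)) := hmean (Nat.zero_le _)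
  set X := frobNorm (Emat P fun ω => vecMulVec (e (k - 1) ω) (e (k - 1) ω))
  set m₀ := euclNorm (Evec P (e 0))
  set u := euclNorm uhat
  calc _ ≤ (1 - μ k * lam) ^ 2 * X + μ k ^ 2 * frobNorm Ψ ^ 2
        * (σθθ2 + 2 * σΩθ2 * (m₀ + u) + σΩΩ2 * (X + 2 * m₀ * u + u ^ 2)) := by
        rw [hS]
        gcongr
        exacts [frobNorm_nonneg _, norm_nonneg _, hcontr k hk,
          (frobNorm_noiseCov_le _ _ _ _ _ _).trans (by rw [hσθθ k hk, hσΩΩ k hk, hσΩθ k hk]; gcongr)]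
    _ = _ := by ring

/-- Lemma 4: the one-step mean-square error bound
`‖E[e^k (e^k)ᵀ]‖_F ≤ ((1 − μ_k λ)² + μ_k² σ_ΩΩ² d²) ‖E[e^{k−1}(e^{k−1})ᵀ]‖_F
  + μ_k² d² (σ_θθ² + 2σ_Ωθ²‖û‖ + σ_ΩΩ²‖û‖²) + 2μ_k² d² (σ_ΩΩ²‖û‖ + σ_Ωθ²) ‖E[e⁰]‖`,
where `Ψ = (B + γC)⁻¹` and `d = ‖Ψ‖_F`. -/
theorem lemma4_mean_square_bound
    {M : ℕ} {Ω' : Type} [MeasurableSpace Ω'] (P : Measure Ω') [IsProbabilityMeasure P]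
    (A B C : Matrix (Fin M) (Fin M) ℝ)
    (hA : A.PosDef)
    (hBsymm : B.IsSymm) (hBinv : IsUnit B)
    (hBA : ∀ x : Fin M → ℝ, euclNorm x = 1 → 0 < x ⬝ᵥ (B⁻¹ * A).mulVec x)
    (hC : C.PosSemidef)
    (γ : ℝ) (hγ : 0 ≤ γ) (hinv : IsUnit (B + γ • C))
    (uhat : Fin M → ℝ)
    (μ : ℕ → ℝ) (hμpos : ∀ k, 1 ≤ k → 0 < μ k)
    (lam : ℝ) (hlam : 0 < lam)
    (hcontr : ∀ j, 1 ≤ j →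
        l2OpNorm (1 - μ j • ((B + γ • C)⁻¹ * A)) ≤ 1 - μ j * lam)
    (hμlam : ∀ j, 1 ≤ j → 0 < μ j * lam ∧ μ j * lam ≤ 1)
    (θ : ℕ → Ω' → Fin M → ℝ) (W : ℕ → Ω' → Matrix (Fin M) (Fin M) ℝ)
    (e : ℕ → Ω' → Fin M → ℝ)
    (hWsymm : ∀ k ω, (W k ω).IsSymm)
    (hθint : ∀ k, IntV P (θ k)) (hθmean : ∀ k, 1 ≤ k → Evec P (θ k) = 0)
    (hWint : ∀ k, IntM P (W k)) (hWmean : ∀ k, 1 ≤ k → Emat P (W k) = 0)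
    (hrec : ∀ k, 1 ≤ k → ∀ ω, e k ω =
        (1 - μ k • ((B + γ • C)⁻¹ * (A + W k ω))).mulVec (e (k - 1) ω)
          + μ k • (B + γ • C)⁻¹.mulVec (θ k ω - (W k ω).mulVec uhat))
    (hindep : ∀ k, 1 ≤ k → IndepFun (fun ω => (θ k ω, W k ω)) (fun ω => e (k - 1) ω) P)
    (heint : ∀ k, IntV P (e k))
    (heeint : ∀ k, IntM P (fun ω => vecMulVec (e k ω) (e k ω)))
    (hint1 : ∀ k, 1 ≤ k → IntM P (fun ω =>
        vecMulVec (θ k ω - (W k ω).mulVec uhat) (θ k ω - (W k ω).mulVec uhat)))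
    (hint2 : ∀ k, 1 ≤ k → IntM P (fun ω =>
        W k ω * vecMulVec (e (k - 1) ω) (e (k - 1) ω) * W k ω))
    (hint3 : ∀ k, 1 ≤ k → IntM P (fun ω => W k ω * vecMulVec (e (k - 1) ω) (θ k ω)))
    (hint4 : ∀ k, 1 ≤ k → IntM P (fun ω => W k ω * vecMulVec (e (k - 1) ω) uhat * W k ω))
    (hint5 : ∀ k, 1 ≤ k → IntM P (fun ω => vecMulVec (θ k ω) (e (k - 1) ω) * W k ω))
    (hint6 : ∀ k, 1 ≤ k → IntM P (fun ω => W k ω * vecMulVec uhat (e (k - 1) ω) * W k ω))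
    (hint7 : ∀ k, 1 ≤ k → IntM P (fun ω =>
        vecMulVec (e (k - 1) ω) (θ k ω - (W k ω).mulVec uhat)))
    (hint8 : ∀ k, 1 ≤ k → IntM P (fun ω =>
        W k ω * vecMulVec (e (k - 1) ω) (e (k - 1) ω)))
    (hintθθ : ∀ k, 1 ≤ k → IntM P (fun ω => vecMulVec (θ k ω) (θ k ω)))
    (hintΩΩ : ∀ k, 1 ≤ k → IntM P (fun ω => vecOuter (W k ω) (W k ω)))
    (hintΩθ : ∀ k, 1 ≤ k → IntM P (fun ω => vecOuterVec (W k ω) (θ k ω)))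
    (σθθ2 σΩΩ2 σΩθ2 : ℝ)
    (hσθθ : ∀ k, 1 ≤ k → frobNorm (Emat P (fun ω => vecMulVec (θ k ω) (θ k ω))) = σθθ2)
    (hσΩΩ : ∀ k, 1 ≤ k → frobNorm (Emat P (fun ω => vecOuter (W k ω) (W k ω))) = σΩΩ2)
    (hσΩθ : ∀ k, 1 ≤ k → frobNorm (Emat P (fun ω => vecOuterVec (W k ω) (θ k ω))) = σΩθ2) :
    ∀ k, 1 ≤ k →
      frobNorm (Emat P (fun ω => vecMulVec (e k ω) (e k ω))) ≤
        ((1 - μ k * lam) ^ 2 + (μ k) ^ 2 * σΩΩ2 * (frobNorm ((B + γ • C)⁻¹)) ^ 2)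
            * frobNorm (Emat P (fun ω => vecMulVec (e (k - 1) ω) (e (k - 1) ω)))
        + (μ k) ^ 2 * (frobNorm ((B + γ • C)⁻¹)) ^ 2
            * (σθθ2 + 2 * σΩθ2 * euclNorm uhat + σΩΩ2 * (euclNorm uhat) ^ 2)
        + 2 * (μ k) ^ 2 * (frobNorm ((B + γ • C)⁻¹)) ^ 2
            * (σΩΩ2 * euclNorm uhat + σΩθ2) * euclNorm (Evec P (e 0)) :=
  lemma4_mean_square_bound_general P A B C γ uhat μ lam hcontr hμlam θ W e hθint hθmean hWint hWmean
    hrec hindep heint heeint hintθθ hintΩΩ hintΩθ σθθ2 σΩΩ2 σΩθ2 hσθθ hσΩΩ hσΩθ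
end

section
/- Let λ > 0 and let (μ_k)_{k≥1} be a sequence of positive real numbers with 0 < μ_k λ < 2 for all k, Σ_{k=1}^∞ μ_k = ∞ and Σ_{k=1}^∞ μ_k² < ∞. Define T_k := Σ_{j=1}^{k} ( Π_{i=2}^{j} (1 − μ_{k−i+2} λ)² ) μ_{k−j+1}², equivalently T_k = Σ_{m=1}^{k} μ_m² Π_{i=m+1}^{k} (1 − μ_i λ)². Then lim_{k→∞} T_k = 0. -/
open Filter

/-- if `λ > 0`, `0 < μ_k λ < 2`, `Σ μ_k = ∞` and `Σ μ_k² < ∞`, then the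
accumulated fluctuation term `T_k = Σ_{m=1}^k μ_m² Π_{i=m+1}^k (1 − μ_i λ)²` tends to `0`. -/
theorem fluctuation_term_vanishes
    (lam : ℝ) (hlam : 0 < lam) (μ : ℕ → ℝ)
    (hpos : ∀ k, 1 ≤ k → 0 < μ k * lam ∧ μ k * lam < 2)
    (hdiv : ¬ Summable (fun k : ℕ => μ (k + 1)))
    (hsq : Summable (fun k : ℕ => (μ (k + 1)) ^ 2)) :
    Tendsto (fun k : ℕ =>
        ∑ m ∈ Finset.Icc 1 k, (μ m) ^ 2 * ∏ i ∈ Finset.Icc (m + 1) k, (1 - μ i * lam) ^ 2)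
      atTop (nhds 0) := by
  classical
  set q : ℕ → ℝ := fun i => (1 - μ i * lam) ^ 2 with hqdef
  have hq0 : ∀ i, 0 ≤ q i := fun i => sq_nonneg _
  have hμ : ∀ i, 1 ≤ i → 0 < μ i := by
    intro i hi
    have h := (hpos i hi).1
    by_contra h'; push_neg at h'
    nlinarith
  have hq1 : ∀ i, 1 ≤ i → q i ≤ 1 := by
    intro i hi
    have h1 := (hpos i hi).1
    have h2 := (hpos i hi).2
    simp only [hqdef]
    nlinarith
  have hqexp : ∀ i, q i ≤ Real.exp ((μ i * lam) ^ 2 - 2 * (μ i * lam)) := by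
    intro i
    have h := Real.add_one_le_exp ((μ i * lam) ^ 2 - 2 * (μ i * lam))
    simp only [hqdef]
    nlinarith
  have hterm_nonneg : ∀ m k, 0 ≤ μ m ^ 2 * ∏ i ∈ Finset.Icc (m + 1) k, q i :=
    fun m k => mul_nonneg (sq_nonneg _) (Finset.prod_nonneg fun i _ => hq0 i)
  have hT_nonneg : ∀ k, 0 ≤ ∑ m ∈ Finset.Icc 1 k, μ m ^ 2 * ∏ i ∈ Finset.Icc (m + 1) k, q i :=
    fun k => Finset.sum_nonneg fun m _ => hterm_nonneg m k
  -- tail sums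
  have hshift : ∀ a : ℕ, Summable (fun n => μ (n + a + 1) ^ 2) := by
    intro a
    have := (summable_nat_add_iff (f := fun n => μ (n + 1) ^ 2) a).2 hsq
    simpa using this
  have hIccB : ∀ a k : ℕ, ∑ m ∈ Finset.Icc (a + 1) k, μ m ^ 2 ≤ ∑' n, μ (n + a + 1) ^ 2 := by
    intro a k
    have h1 : ∑ m ∈ Finset.Icc (a + 1) k, μ m ^ 2
        = ∑ n ∈ Finset.range (k + 1 - (a + 1)), μ ((a + 1) + n) ^ 2 := by
      rw [← Finset.Ico_add_one_right_eq_Icc, Finset.sum_Ico_eq_sum_range]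
    rw [h1]
    have h2 : ∀ n, μ ((a + 1) + n) ^ 2 = μ (n + a + 1) ^ 2 := by
      intro n; congr 2; omega
    calc ∑ n ∈ Finset.range (k + 1 - (a + 1)), μ ((a + 1) + n) ^ 2
        = ∑ n ∈ Finset.range (k + 1 - (a + 1)), μ (n + a + 1) ^ 2 := by
          exact Finset.sum_congr rfl fun n _ => h2 n
      _ ≤ ∑' n, μ (n + a + 1) ^ 2 :=
          Summable.sum_le_tsum _ (fun n _ => sq_nonneg _) (hshift a)
  -- divergence of partial sums
  have hIcc1 : ∀ j : ℕ, Finset.Icc 1 j = Finset.Ioc 0 j := by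
    intro j; ext x; simp [Nat.lt_iff_add_one_le]
  have hS : Tendsto (fun k => ∑ m ∈ Finset.Icc 1 k, μ m) atTop atTop := by
    have h0 : ∀ n : ℕ, 0 ≤ μ (n + 1) := fun n => (hμ (n + 1) (by omega)).le
    have h := (not_summable_iff_tendsto_nat_atTop_of_nonneg h0).1 hdiv
    refine h.congr fun k => ?_
    rw [← Finset.Ico_add_one_right_eq_Icc, Finset.sum_Ico_eq_sum_range]
    exact Finset.sum_congr (by simp) fun n _ => by rw [Nat.add_comm]
  rw [Metric.tendsto_atTop]
  intro ε hε
  -- choose N with small tail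
  obtain ⟨N, hN⟩ := Metric.tendsto_atTop.mp
    (tendsto_sum_nat_add (fun n => μ (n + 1) ^ 2)) (ε / 2) (by linarith)
  have htail : ∑' n, μ (n + N + 1) ^ 2 < ε / 2 := by
    have := hN N le_rfl
    rw [Real.dist_eq, sub_zero] at this
    calc ∑' n, μ (n + N + 1) ^ 2 ≤ |∑' (k : ℕ), μ (k + N + 1) ^ 2| := le_abs_self _
      _ < ε / 2 := this
  -- the product over Ioc N k tends to 0
  have hPk : Tendsto (fun k => ∏ i ∈ Finset.Ioc N k, q i) atTop (nhds 0) := by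
    set D : ℝ := ∑' n, μ (n + N + 1) ^ 2 with hD
    have hA : Tendsto (fun k => ∑ i ∈ Finset.Ioc N k, μ i) atTop atTop := by
      have h1 : Tendsto (fun k => ∑ m ∈ Finset.Icc 1 k, μ m - ∑ m ∈ Finset.Icc 1 N, μ m)
          atTop atTop := tendsto_atTop_add_const_right _ _ hS
      refine h1.congr' ?_
      filter_upwards [eventually_ge_atTop N] with k hk
      have h2 := Finset.sum_Ioc_consecutive μ (Nat.zero_le N) hk
      rw [hIcc1 k, hIcc1 N]
      linarith
    have hbound : ∀ k, ∏ i ∈ Finset.Ioc N k, q i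
        ≤ Real.exp (lam ^ 2 * D - 2 * lam * ∑ i ∈ Finset.Ioc N k, μ i) := by
      intro k
      have h1 : ∏ i ∈ Finset.Ioc N k, q i
          ≤ ∏ i ∈ Finset.Ioc N k, Real.exp ((μ i * lam) ^ 2 - 2 * (μ i * lam)) :=
        Finset.prod_le_prod (fun i _ => hq0 i) (fun i _ => hqexp i)
      rw [← Real.exp_sum] at h1
      refine h1.trans (Real.exp_le_exp.2 ?_)
      have h2 : ∑ i ∈ Finset.Ioc N k, ((μ i * lam) ^ 2 - 2 * (μ i * lam))
          = lam ^ 2 * ∑ i ∈ Finset.Ioc N k, μ i ^ 2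
            - 2 * lam * ∑ i ∈ Finset.Ioc N k, μ i := by
        rw [Finset.sum_sub_distrib, Finset.mul_sum, Finset.mul_sum]
        congr 1
        · exact Finset.sum_congr rfl fun i _ => by ring
        · exact Finset.sum_congr rfl fun i _ => by ring
      rw [h2]
      have h3 : ∑ i ∈ Finset.Ioc N k, μ i ^ 2 ≤ D := by
        have := hIccB N k
        rw [Finset.Icc_add_one_left_eq_Ioc] at this
        exact this
      nlinarith [sq_nonneg lam]
    have hexp : Tendsto (fun k => Real.exp (lam ^ 2 * D - 2 * lam * ∑ i ∈ Finset.Ioc N k, μ i))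
        atTop (nhds 0) := by
      refine Real.tendsto_exp_atBot.comp ?_
      have h4 : Tendsto (fun k => 2 * lam * ∑ i ∈ Finset.Ioc N k, μ i) atTop atTop :=
        hA.const_mul_atTop (by linarith)
      have h5 : Tendsto (fun k => -(2 * lam * ∑ i ∈ Finset.Ioc N k, μ i)) atTop atBot :=
        Filter.tendsto_neg_atBot_iff.2 h4
      have := Filter.tendsto_atBot_add_const_left atTop (lam ^ 2 * D) h5
      refine this.congr fun k => by ring
    exact squeeze_zero (fun k => Finset.prod_nonneg fun i _ => hq0 i) hbound hexp
  set C : ℝ := ∑ m ∈ Finset.Icc 1 N, μ m ^ 2 with hC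
  have hC0 : 0 ≤ C := Finset.sum_nonneg fun m _ => sq_nonneg _
  obtain ⟨K, hK⟩ := Metric.tendsto_atTop.mp hPk (ε / (2 * (C + 1)))
    (by positivity)
  refine ⟨max K N, fun k hk => ?_⟩
  have hkK : K ≤ k := le_trans (le_max_left _ _) hk
  have hkN : N ≤ k := le_trans (le_max_right _ _) hk
  have hPknn : 0 ≤ ∏ i ∈ Finset.Ioc N k, q i := Finset.prod_nonneg fun i _ => hq0 i
  have hPsmall : ∏ i ∈ Finset.Ioc N k, q i < ε / (2 * (C + 1)) := by
    have := hK k hkK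
    rw [Real.dist_eq, sub_zero] at this
    calc ∏ i ∈ Finset.Ioc N k, q i ≤ |∏ i ∈ Finset.Ioc N k, q i| := le_abs_self _
      _ < _ := this
  rw [Real.dist_eq, sub_zero, abs_of_nonneg (hT_nonneg k)]
  -- split the sum
  have hsplit : ∑ m ∈ Finset.Icc 1 k, μ m ^ 2 * ∏ i ∈ Finset.Icc (m + 1) k, q i
      = (∑ m ∈ Finset.Ioc 0 N, μ m ^ 2 * ∏ i ∈ Finset.Icc (m + 1) k, q i)
        + ∑ m ∈ Finset.Ioc N k, μ m ^ 2 * ∏ i ∈ Finset.Icc (m + 1) k, q i := by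
    rw [hIcc1 k, ← Finset.sum_Ioc_consecutive _ (Nat.zero_le N) hkN]
  rw [hsplit]
  -- first piece
  have hfirst : ∑ m ∈ Finset.Ioc 0 N, μ m ^ 2 * ∏ i ∈ Finset.Icc (m + 1) k, q i
      ≤ C * ∏ i ∈ Finset.Ioc N k, q i := by
    have h1 : ∀ m ∈ Finset.Ioc 0 N, μ m ^ 2 * ∏ i ∈ Finset.Icc (m + 1) k, q i
        ≤ μ m ^ 2 * ∏ i ∈ Finset.Ioc N k, q i := by
      intro m hm
      rw [Finset.mem_Ioc] at hm
      refine mul_le_mul_of_nonneg_left ?_ (sq_nonneg _)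
      rw [Finset.Icc_add_one_left_eq_Ioc m k, ← Finset.prod_Ioc_consecutive q hm.2 hkN]
      have hle1 : ∏ i ∈ Finset.Ioc m N, q i ≤ 1 :=
        Finset.prod_le_one (fun i _ => hq0 i)
          (fun i hi => hq1 i (by have := (Finset.mem_Ioc.1 hi).1; omega))
      nlinarith [Finset.prod_nonneg (fun i (_ : i ∈ Finset.Ioc m N) => hq0 i)]
    calc ∑ m ∈ Finset.Ioc 0 N, μ m ^ 2 * ∏ i ∈ Finset.Icc (m + 1) k, q i
        ≤ ∑ m ∈ Finset.Ioc 0 N, μ m ^ 2 * ∏ i ∈ Finset.Ioc N k, q i :=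
          Finset.sum_le_sum h1
      _ = C * ∏ i ∈ Finset.Ioc N k, q i := by
          rw [← Finset.sum_mul, hC, hIcc1 N]
  -- second piece
  have hsecond : ∑ m ∈ Finset.Ioc N k, μ m ^ 2 * ∏ i ∈ Finset.Icc (m + 1) k, q i
      ≤ ∑' n, μ (n + N + 1) ^ 2 := by
    have h1 : ∀ m ∈ Finset.Ioc N k, μ m ^ 2 * ∏ i ∈ Finset.Icc (m + 1) k, q i ≤ μ m ^ 2 := by
      intro m hm
      rw [Finset.mem_Ioc] at hm
      have hle1 : ∏ i ∈ Finset.Icc (m + 1) k, q i ≤ 1 :=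
        Finset.prod_le_one (fun i _ => hq0 i)
          (fun i hi => hq1 i (by have := (Finset.mem_Icc.1 hi).1; omega))
      nlinarith [Finset.prod_nonneg (fun i (_ : i ∈ Finset.Icc (m + 1) k) => hq0 i),
        sq_nonneg (μ m)]
    calc ∑ m ∈ Finset.Ioc N k, μ m ^ 2 * ∏ i ∈ Finset.Icc (m + 1) k, q i
        ≤ ∑ m ∈ Finset.Ioc N k, μ m ^ 2 := Finset.sum_le_sum h1
      _ ≤ ∑' n, μ (n + N + 1) ^ 2 := by
          have := hIccB N k
          rw [Finset.Icc_add_one_left_eq_Ioc] at this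
          exact this
  have hCP : C * ∏ i ∈ Finset.Ioc N k, q i < ε / 2 := by
    have h1 : C * ∏ i ∈ Finset.Ioc N k, q i ≤ (C + 1) * ∏ i ∈ Finset.Ioc N k, q i := by
      nlinarith
    have h2 : (C + 1) * ∏ i ∈ Finset.Ioc N k, q i < (C + 1) * (ε / (2 * (C + 1))) := by
      refine mul_lt_mul_of_pos_left hPsmall (by linarith)
    have h3 : (C + 1) * (ε / (2 * (C + 1))) = ε / 2 := by
      field_simp
    linarith
  linarith
end
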